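/- arXiv:1308.5268 — 2 statements merged into one kernel-verified Lean document; each statement's English description precedes it below -/
import Mathlib

section
/- Let r, d ∈ ℕ and let 0 ≤ k_1 < k_2 < … < k_d = r be integers. If two splines φ_1, φ_2 ∈ Φ_{r,d−1} satisfy ‖φ_1^{(k_i)}‖ = ‖φ_2^{(k_i)}‖ for all i = 1,…,d, then φ_1 ≡ φ_2. -/
open Set

/-- The "norm" of the k-th derivative of `x` on the half-line `ℝ₋ = (-∞,0]`:
for `k < r` it is the (essential) sup of `|x^{(k)}|` on `ℝ₋` (derivatives taken within `ℝ₋`);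
for `k = r` it is the least Lipschitz constant of `x^{(r-1)}` on `ℝ₋`, which equals the
essential sup norm of the a.e. derivative `x^{(r)}`. -/
noncomputable def nrm (r k : ℕ) (x : ℝ → ℝ) : ℝ :=
  if k = r then
    sInf {L : ℝ | 0 ≤ L ∧ LipschitzOnWith (Real.toNNReal L)
      (iteratedDerivWithin (r - 1) x (Set.Iic 0)) (Set.Iic 0)}
  else
    sSup ((fun t => |iteratedDerivWithin k x (Set.Iic 0) t|) '' Set.Iic 0)

/-- The class `L^{r,r}_{∞,∞}(ℝ₋)` of `r`-monotone functions: `x` has derivatives up to order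
`r-1` on `ℝ₋`, `x^{(r-1)}` is Lipschitz on `ℝ₋` (equivalently, it is locally absolutely
continuous with essentially bounded a.e. derivative `x^{(r)}`), `x` is bounded,
`x^{(k)} ≥ 0` on `ℝ₋` for `k = 0,…,r-1`, and `x^{(r)} ≥ 0` a.e.
(equivalently, `x^{(r-1)}` is nondecreasing on `ℝ₋`). -/
def MemLrr (r : ℕ) (x : ℝ → ℝ) : Prop :=
  ContDiffOn ℝ (r - 1 : ℕ) x (Set.Iic 0) ∧
  (∃ L : NNReal, LipschitzOnWith L (iteratedDerivWithin (r - 1) x (Set.Iic 0)) (Set.Iic 0)) ∧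
  BddAbove ((fun t => |x t|) '' Set.Iic 0) ∧
  (∀ k, k < r → ∀ t ∈ Set.Iic (0 : ℝ), 0 ≤ iteratedDerivWithin k x (Set.Iic 0) t) ∧
  MonotoneOn (iteratedDerivWithin (r - 1) x (Set.Iic 0)) (Set.Iic 0)

/-- The spline `φ(a_1,…,a_s,l;t) = (l/r!) ∑_{j=1}^s (-1)^{j+1} (t+a_j)_+^r`
(here `a` is 0-indexed: `a 0 = a_1`, …, `a (s-1) = a_s`). -/
noncomputable def splineFun (r s : ℕ) (a : ℕ → ℝ) (l : ℝ) : ℝ → ℝ :=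
  fun t => (l / (Nat.factorial r : ℝ)) *
    ∑ j ∈ Finset.range s, (-1 : ℝ) ^ j * (max (t + a j) 0) ^ r

/-- `φ ∈ Φ_{r,n}`: `φ` is a spline of order `r` with `s` knots, `1 ≤ s ≤ n`,
`a_1 > a_2 > … > a_s > 0` and `l > 0`. -/
def IsSpline (r n : ℕ) (φ : ℝ → ℝ) : Prop :=
  ∃ s : ℕ, 1 ≤ s ∧ s ≤ n ∧
    ∃ (a : ℕ → ℝ) (l : ℝ),
      (∀ i j, i < j → j < s → a j < a i) ∧ (∀ j, j < s → 0 < a j) ∧ 0 < l ∧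
      φ = splineFun r s a l

/-- The tuple `(M_{k_lo},…,M_{k_d})` of positive numbers is admissible for
`L^{r,r}_{∞,∞}(ℝ₋)` and the orders `k_lo < … < k_d`. -/
def Admissible (r d lo : ℕ) (k : ℕ → ℕ) (M : ℕ → ℝ) : Prop :=
  ∃ x : ℝ → ℝ, MemLrr r x ∧ ∀ i, lo ≤ i → i ≤ d → nrm r (k i) x = M i

/-- Type 1 admissible set (for the tuple of orders `k_lo,…,k_d`, of length `d-lo+1`):
some spline in `Φ_{r,d-lo} \ Φ_{r,d-lo-1}` realizes the prescribed norms. -/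
def Type1 (r d lo : ℕ) (k : ℕ → ℕ) (M : ℕ → ℝ) : Prop :=
  Admissible r d lo k M ∧
  ∃ φ : ℝ → ℝ, IsSpline r (d - lo) φ ∧ ¬ IsSpline r (d - lo - 1) φ ∧
    ∀ i, lo ≤ i → i ≤ d → nrm r (k i) φ = M i

/-- Type 2 admissible set: some spline in `Φ_{r,d-lo-1}` realizes the prescribed norms. -/
def Type2 (r d lo : ℕ) (k : ℕ → ℕ) (M : ℕ → ℝ) : Prop :=
  Admissible r d lo k M ∧
  ∃ φ : ℝ → ℝ, IsSpline r (d - lo - 1) φ ∧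
    ∀ i, lo ≤ i → i ≤ d → nrm r (k i) φ = M i

/-- Type 3 admissible set: `k_lo = 0`, the set is not of Type 1, and some spline
`φ ∈ Φ_{r,d-lo}` plus a constant `C > 0` realizes the prescribed norms. -/
def Type3 (r d lo : ℕ) (k : ℕ → ℕ) (M : ℕ → ℝ) : Prop :=
  Admissible r d lo k M ∧ k lo = 0 ∧ ¬ Type1 r d lo k M ∧
  ∃ (φ : ℝ → ℝ) (C : ℝ), IsSpline r (d - lo) φ ∧ 0 < C ∧
    ∀ i, lo ≤ i → i ≤ d → nrm r (k i) (fun t => φ t + C) = M i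

/-!
By the explicit formulas for the norms of a spline, `φ₁` and `φ₂` have the same `l`, and their
knot sequences `a`, `b` have equal alternating power sums `∑_j (-1)^j a_j^p` for the `d - 1`
exponents `p = r - k_i`, `i < d`. Since
`∑_j (-1)^j a_j^p = p ∫_0^∞ x^(p-1) χ_a(x) dx` for the step function
`χ_a = ∑_j (-1)^j 1_{(-∞, a_j]}`, the difference `D = χ_a - χ_b` is orthogonal to these `d - 1`
monomials. An induction on the knots shows that `D` changes sign at most `d - 2` times on
`(0, ∞)`; by Descartes' rule of signs a nonzero combination `ψ` of the monomials vanishing at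
these points changes sign exactly there, so `D ψ` has constant sign and integral zero. As `D` is
locally constant from the left, this forces `D = 0`, and `χ_a = χ_b` determines the knots.
-/

open Finset (range mem_range)
open scoped Finset Topology
open MeasureTheory

lemma alternating_sum_nonneg_and_le {R : Type*} [CommRing R] [LinearOrder R] [IsStrictOrderedRing R]
    {s : ℕ} {c : ℕ → R} (hc : ∀ i j, i ≤ j → j < s → c j ≤ c i)
    (hc0 : ∀ j, 0 ≤ c j) :
    0 ≤ ∑ j ∈ range s, (-1) ^ j * c j ∧ ∑ j ∈ range s, (-1) ^ j * c j ≤ c 0 := by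
  induction s generalizing c with
  | zero => simpa using hc0 0
  | succ s ih =>
    have h := ih (c := fun j => c (j + 1)) (fun i j hij hj => hc _ _ (by omega) (by omega))
      (fun j => hc0 _)
    have hsplit : ∑ j ∈ range (s + 1), (-1) ^ j * c j
        = c 0 - ∑ j ∈ range s, (-1) ^ j * c (j + 1) := by
      rw [Finset.sum_range_succ', sub_eq_neg_add, ← Finset.sum_neg_distrib]
      simp [pow_succ]
    have h10 : s = 0 ∨ c 1 ≤ c 0 := by
      rcases s with _ | s
      · exact Or.inl rfl
      · exact Or.inr (hc 0 1 (by omega) (by omega))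
    rw [hsplit]
    rcases h10 with rfl | h10
    · simpa using hc0 0
    · constructor <;> linarith [h.1, h.2]

/-- `splineFun r s a l = (l / r!) • truncPowSum s a r`. -/
noncomputable def truncPowSum (s : ℕ) (a : ℕ → ℝ) (q : ℕ) (t : ℝ) : ℝ :=
  ∑ j ∈ range s, (-1) ^ j * max (t + a j) 0 ^ q

lemma hasDerivAt_max_zero_pow {q : ℕ} (hq : 2 ≤ q) (x : ℝ) :
    HasDerivAt (fun y : ℝ => max y 0 ^ q) (q * max x 0 ^ (q - 1)) x := by
  have hq0 : (0 : ℝ) ^ (q - 1) = 0 := zero_pow (by omega)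
  rcases lt_trichotomy x 0 with hx | rfl | hx
  · refine (hasDerivAt_const x (0 : ℝ)).congr_of_eventuallyEq ?_ |>.congr_deriv (by
      simp [max_eq_right hx.le, hq0])
    filter_upwards [Iio_mem_nhds hx] with y hy
    simp [max_eq_right (mem_Iio.1 hy).le, zero_pow (by omega : q ≠ 0)]
  · have hleft : HasDerivWithinAt (fun y : ℝ => max y 0 ^ q) 0 (Iic 0) 0 :=
      (hasDerivWithinAt_const 0 _ (0 : ℝ)).congr (fun y hy => by
        simp [max_eq_right (mem_Iic.1 hy), zero_pow (by omega : q ≠ 0)]) (by simp; omega)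
    have hright : HasDerivWithinAt (fun y : ℝ => max y 0 ^ q) 0 (Ici 0) 0 :=
      ((hasDerivAt_pow q (0 : ℝ)).hasDerivWithinAt.congr (fun y hy => by
        simp [max_eq_left (mem_Ici.1 hy)]) (by simp)).congr_deriv (by simp [hq0])
    simpa [hq0, ← hasDerivWithinAt_univ] using hleft.union hright
  · refine (hasDerivAt_pow q x).congr_of_eventuallyEq ?_ |>.congr_deriv (by
      simp [max_eq_left hx.le])
    filter_upwards [Ioi_mem_nhds hx] with y hy
    simp [max_eq_left (mem_Ioi.1 hy).le]

section truncPowSum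

variable {s : ℕ} {a : ℕ → ℝ}

lemma hasDerivAt_truncPowSum {q : ℕ} (hq : 2 ≤ q) (t : ℝ) :
    HasDerivAt (truncPowSum s a q) (q * truncPowSum s a (q - 1) t) t := by
  refine (HasDerivAt.fun_sum (u := range s) fun j _ =>
    (((hasDerivAt_max_zero_pow hq (t + a j)).comp t
      ((hasDerivAt_id t).add_const (a j))).const_mul ((-1 : ℝ) ^ j))).congr_deriv ?_
  simp only [truncPowSum, Finset.mul_sum, mul_one]
  exact Finset.sum_congr rfl fun j _ => by ring

lemma truncPowSum_nonneg (ha : ∀ i j, i < j → j < s → a j < a i) (q : ℕ) (t : ℝ) :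
    0 ≤ truncPowSum s a q t := by
  refine (alternating_sum_nonneg_and_le (fun i j hij hj => ?_) fun j => by positivity).1
  rcases hij.eq_or_lt with rfl | h
  · rfl
  · exact pow_le_pow_left₀ (le_max_right _ _) (max_le_max (by linarith [ha i j h hj]) le_rfl) q

lemma max_zero_sub_le_of_le {t₁ t₂ u v : ℝ} (ht : t₁ ≤ t₂) (huv : u ≤ v) :
    max (t₂ + u) 0 - max (t₁ + u) 0 ≤ max (t₂ + v) 0 - max (t₁ + v) 0 := by
  rcases le_total (t₂ + u) 0 with h1 | h1 <;> rcases le_total (t₁ + u) 0 with h2 | h2 <;>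
    rcases le_total (t₂ + v) 0 with h3 | h3 <;> rcases le_total (t₁ + v) 0 with h4 | h4 <;>
    simp only [max_eq_left, max_eq_right, *] <;> linarith

lemma truncPowSum_one_sub_mem_Icc (ha : ∀ i j, i < j → j < s → a j < a i) {t₁ t₂ : ℝ}
    (ht : t₁ ≤ t₂) :
    truncPowSum s a 1 t₂ - truncPowSum s a 1 t₁ ∈ Icc 0 (t₂ - t₁) := by
  have hsub : truncPowSum s a 1 t₂ - truncPowSum s a 1 t₁
      = ∑ j ∈ range s, (-1) ^ j * (max (t₂ + a j) 0 - max (t₁ + a j) 0) := by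
    simp only [truncPowSum, pow_one, ← Finset.sum_sub_distrib, mul_sub]
  have hc := alternating_sum_nonneg_and_le (s := s)
    (c := fun j => max (t₂ + a j) 0 - max (t₁ + a j) 0) (fun i j hij hj => by
      rcases hij.eq_or_lt with rfl | h
      · rfl
      · exact max_zero_sub_le_of_le ht (ha i j h hj).le)
    (fun j => sub_nonneg.2 (max_le_max (by linarith) le_rfl))
  rw [hsub]
  refine ⟨hc.1, hc.2.trans ?_⟩
  rcases le_total (t₂ + a 0) 0 with h1 | h1 <;> rcases le_total (t₁ + a 0) 0 with h2 | h2 <;>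
    simp only [max_eq_left, max_eq_right, *] <;> linarith

lemma monotone_truncPowSum (ha : ∀ i j, i < j → j < s → a j < a i) {q : ℕ} (hq : 1 ≤ q) :
    Monotone (truncPowSum s a q) := by
  rcases hq.eq_or_lt with rfl | hq
  · exact fun t₁ t₂ ht => sub_nonneg.1 (truncPowSum_one_sub_mem_Icc ha ht).1
  · refine monotone_of_deriv_nonneg (fun t => (hasDerivAt_truncPowSum hq t).differentiableAt)
      fun t => ?_
    rw [(hasDerivAt_truncPowSum hq t).deriv]
    exact mul_nonneg (Nat.cast_nonneg q) (truncPowSum_nonneg ha _ t)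

lemma truncPowSum_zero (hpos : ∀ j, j < s → 0 < a j) (q : ℕ) :
    truncPowSum s a q 0 = ∑ j ∈ range s, (-1) ^ j * a j ^ q :=
  Finset.sum_congr rfl fun j hj => by rw [zero_add, max_eq_left (hpos j (mem_range.1 hj)).le]

lemma truncPowSum_one_eq (hs : 1 ≤ s) {t : ℝ}
    (ht₀ : -a 0 ≤ t) (ht : ∀ j, 1 ≤ j → j < s → t ≤ -a j) :
    truncPowSum s a 1 t = t + a 0 := by
  rw [truncPowSum, Finset.sum_eq_single_of_mem 0 (mem_range.2 hs)]
  · simp [max_eq_left (by linarith : 0 ≤ t + a 0)]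
  · intro j hj hj0
    have := ht j (by omega) (mem_range.1 hj)
    simp [max_eq_right (by linarith : t + a j ≤ 0)]

lemma lipschitzWith_truncPowSum_one (ha : ∀ i j, i < j → j < s → a j < a i) :
    LipschitzWith 1 (truncPowSum s a 1) := by
  refine LipschitzWith.of_le_add_mul 1 fun x y => ?_
  rw [NNReal.coe_one, one_mul, Real.dist_eq]
  rcases le_total x y with h | h
  · linarith [(truncPowSum_one_sub_mem_Icc ha h).1, abs_nonneg (x - y)]
  · linarith [(truncPowSum_one_sub_mem_Icc ha h).2, le_abs_self (x - y)]

/-- On `[-a 0, -a 1]` (or `[-a 0, 0]` if `s = 1`), `truncPowSum s a 1` has slope `1`. -/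
lemma exists_truncPowSum_one_sub_eq (ha : ∀ i j, i < j → j < s → a j < a i)
    (hpos : ∀ j, j < s → 0 < a j) (hs : 1 ≤ s) :
    ∃ u v, u ∈ Iic (0 : ℝ) ∧ v ∈ Iic (0 : ℝ) ∧ u < v ∧
      truncPowSum s a 1 v - truncPowSum s a 1 u = v - u := by
  have ha0 : ∀ j, 1 ≤ j → j < s → a j < a 0 := fun j hj1 hj => ha 0 j (by omega) hj
  rcases Nat.lt_or_ge 1 s with hs1 | hs1
  · have ha1 : ∀ j, 1 ≤ j → j < s → a j ≤ a 1 := fun j hj1 hj => by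
      rcases hj1.eq_or_lt with rfl | h
      · rfl
      · exact (ha 1 j h hj).le
    refine ⟨-a 0, -a 1, by simp [(hpos 0 hs).le], by simp [(hpos 1 hs1).le],
      by linarith [ha0 1 le_rfl hs1], ?_⟩
    rw [truncPowSum_one_eq hs le_rfl fun j hj1 hj => by linarith [ha0 j hj1 hj],
      truncPowSum_one_eq hs (by linarith [ha0 1 le_rfl hs1]) fun j hj1 hj => by
        linarith [ha1 j hj1 hj]]
    ring
  · refine ⟨-a 0, 0, by simp [(hpos 0 hs).le], mem_Iic.2 le_rfl, by linarith [hpos 0 hs], ?_⟩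
    rw [truncPowSum_one_eq hs le_rfl fun j _ hj => by omega,
      truncPowSum_one_eq hs (by linarith [hpos 0 hs]) fun j _ hj => by omega]
    ring

end truncPowSum

section splineNorms

variable {r s : ℕ} {a : ℕ → ℝ} {l : ℝ}

lemma iteratedDerivWithin_splineFun {m : ℕ} (hm : m < r) {t : ℝ} (ht : t ∈ Iic (0 : ℝ)) :
    iteratedDerivWithin m (splineFun r s a l) (Iic 0) t
      = l / (r - m).factorial * truncPowSum s a (r - m) t := by
  induction m generalizing t with
  | zero => rfl
  | succ m ih =>
    have hderiv : HasDerivWithinAt (iteratedDerivWithin m (splineFun r s a l) (Iic 0))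
        (l / (r - m).factorial * ((r - m : ℕ) * truncPowSum s a (r - m - 1) t)) (Iic 0) t :=
      ((hasDerivAt_truncPowSum (by omega) t).const_mul _).hasDerivWithinAt.congr
        (fun y hy => ih (by omega) hy) (ih (by omega) ht)
    rw [iteratedDerivWithin_succ, hderiv.derivWithin (uniqueDiffOn_Iic 0 t ht),
      show r - (m + 1) = r - m - 1 by omega,
      show r - m = r - m - 1 + 1 by omega, Nat.factorial_succ]
    push_cast
    field_simp

lemma nrm_splineFun_of_lt (ha : ∀ i j, i < j → j < s → a j < a i)
    (hpos : ∀ j, j < s → 0 < a j) (hl : 0 < l) {m : ℕ} (hm : m < r) :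
    nrm r m (splineFun r s a l)
      = l / (r - m).factorial * ∑ j ∈ range s, (-1) ^ j * a j ^ (r - m) := by
  have hc : 0 ≤ l / (r - m).factorial := by positivity
  have himage : (fun t => |iteratedDerivWithin m (splineFun r s a l) (Iic 0) t|) '' Iic 0
      = (fun t => l / (r - m).factorial * truncPowSum s a (r - m) t) '' Iic 0 :=
    image_congr fun t ht => by
      rw [iteratedDerivWithin_splineFun hm ht,
        abs_of_nonneg (mul_nonneg hc (truncPowSum_nonneg ha _ t))]
  have hgreatest :
      IsGreatest ((fun t => l / (r - m).factorial * truncPowSum s a (r - m) t) '' Iic 0)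
        (l / (r - m).factorial * truncPowSum s a (r - m) 0) := by
    refine ⟨mem_image_of_mem _ (mem_Iic.2 le_rfl), ?_⟩
    rintro _ ⟨t, ht, rfl⟩
    exact mul_le_mul_of_nonneg_left (monotone_truncPowSum ha (by omega) ht) hc
  rw [nrm, if_neg hm.ne, himage, hgreatest.csSup_eq, truncPowSum_zero hpos]

lemma nrm_splineFun_self (ha : ∀ i j, i < j → j < s → a j < a i)
    (hpos : ∀ j, j < s → 0 < a j) (hl : 0 < l) (hs : 1 ≤ s) (hr : 1 ≤ r) :
    nrm r r (splineFun r s a l) = l := by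
  have hform : ∀ t ∈ Iic (0 : ℝ),
      iteratedDerivWithin (r - 1) (splineFun r s a l) (Iic 0) t = l * truncPowSum s a 1 t := by
    intro t ht
    rw [iteratedDerivWithin_splineFun (by omega) ht, show r - (r - 1) = 1 by omega]
    simp
  suffices {L : ℝ | 0 ≤ L ∧ LipschitzOnWith L.toNNReal
      (iteratedDerivWithin (r - 1) (splineFun r s a l) (Iic 0)) (Iic 0)} = Ici l by
    rw [nrm, if_pos rfl, this, csInf_Ici]
  ext L
  simp only [mem_ofPred_eq, mem_Ici, lipschitzOnWith_iff_dist_le_mul]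
  constructor
  · rintro ⟨hL, hLip⟩
    obtain ⟨u, v, hu, hv, huv, hslope⟩ := exists_truncPowSum_one_sub_eq ha hpos hs
    have h := hLip v hv u hu
    rw [hform v hv, hform u hu, Real.coe_toNNReal L hL, Real.dist_eq, Real.dist_eq, ← mul_sub,
      hslope, abs_of_pos (by nlinarith), abs_of_pos (by linarith)] at h
    nlinarith
  · intro hL
    refine ⟨hl.le.trans hL, fun x hx y hy => ?_⟩
    rw [hform x hx, hform y hy, Real.coe_toNNReal L (hl.le.trans hL), Real.dist_eq, ← mul_sub,
      abs_mul, abs_of_pos hl, ← Real.dist_eq]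
    have h := (lipschitzWith_truncPowSum_one ha).dist_le_mul x y
    rw [NNReal.coe_one, one_mul] at h
    exact (mul_le_mul_of_nonneg_left h hl.le).trans
      (mul_le_mul_of_nonneg_right hL dist_nonneg)

end splineNorms

def IsKnotSeq (s : ℕ) (a : ℕ → ℝ) : Prop :=
  (∀ i j, i < j → j < s → a j < a i) ∧ ∀ j, j < s → 0 < a j

/-- For decreasing knots, the indicator of `⋃_i (a_{2i+1}, a_{2i}]`; it is chosen so that
`∫_0^∞ p x^{p-1} knotIndicator s a x dx = ∑_j (-1)^j a_j^p`. -/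
noncomputable def knotIndicator (s : ℕ) (a : ℕ → ℝ) (x : ℝ) : ℝ :=
  ∑ j ∈ range s, (-1) ^ j * (Iic (a j)).indicator 1 x

section knotIndicator

variable {s s' : ℕ} {a b : ℕ → ℝ}

lemma IsKnotSeq.tail (ha : IsKnotSeq (s + 1) a) : IsKnotSeq s (fun j => a (j + 1)) :=
  ⟨fun i j hij hj => ha.1 _ _ (by omega) (by omega), fun j hj => ha.2 _ (by omega)⟩

lemma IsKnotSeq.le_head (ha : IsKnotSeq s a) {j : ℕ} (hj : j < s) : a j ≤ a 0 := by
  rcases Nat.eq_zero_or_pos j with rfl | h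
  · rfl
  · exact (ha.1 0 j h hj).le

lemma knotIndicator_zero (a : ℕ → ℝ) (x : ℝ) : knotIndicator 0 a x = 0 := by
  simp [knotIndicator]

lemma knotIndicator_succ (s : ℕ) (a : ℕ → ℝ) (x : ℝ) :
    knotIndicator (s + 1) a x
      = (Iic (a 0)).indicator 1 x - knotIndicator s (fun j => a (j + 1)) x := by
  rw [knotIndicator, Finset.sum_range_succ', sub_eq_neg_add, knotIndicator,
    ← Finset.sum_neg_distrib]
  simp [pow_succ]

lemma knotIndicator_succ_of_le {x : ℝ} (hx : x ≤ a 0) :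
    knotIndicator (s + 1) a x = 1 - knotIndicator s (fun j => a (j + 1)) x := by
  rw [knotIndicator_succ, indicator_of_mem (mem_Iic.2 hx), Pi.one_apply]

lemma knotIndicator_eq_zero {x : ℝ} (hx : ∀ j, j < s → a j < x) : knotIndicator s a x = 0 :=
  Finset.sum_eq_zero fun j hj => by
    rw [indicator_of_notMem (notMem_Iic.2 (hx j (mem_range.1 hj))), mul_zero]

lemma knotIndicator_head (ha : IsKnotSeq (s + 1) a) : knotIndicator (s + 1) a (a 0) = 1 := by
  rw [knotIndicator_succ_of_le le_rfl,
    knotIndicator_eq_zero fun j hj => ha.1 0 (j + 1) (by omega) (by omega), sub_zero]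

lemma knotIndicator_eq_zero_or_one (ha : ∀ i j, i < j → j < s → a j < a i) (x : ℝ) :
    knotIndicator s a x = 0 ∨ knotIndicator s a x = 1 := by
  induction s generalizing a with
  | zero => simp [knotIndicator_zero]
  | succ s ih =>
    by_cases hx : x ≤ a 0
    · rw [knotIndicator_succ_of_le hx]
      rcases ih (a := fun j => a (j + 1)) (fun i j hij hj => ha _ _ (by omega) (by omega)) with
        h | h <;> simp [h]
    · refine Or.inl (knotIndicator_eq_zero fun j hj => ?_)
      rcases Nat.eq_zero_or_pos j with rfl | h
      · exact not_le.1 hx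
      · linarith [ha 0 j h hj]

lemma eventually_knotIndicator_eq (s : ℕ) (a : ℕ → ℝ) (x : ℝ) :
    ∀ᶠ y in 𝓝[<] x, knotIndicator s a y = knotIndicator s a x := by
  have h : ∀ j ∈ range s, ∀ᶠ y in 𝓝[<] x,
      (Iic (a j)).indicator (1 : ℝ → ℝ) y = (Iic (a j)).indicator 1 x := by
    intro j _
    by_cases hx : x ≤ a j
    · filter_upwards [self_mem_nhdsWithin] with y hy
      rw [indicator_of_mem (mem_Iic.2 hx),
        indicator_of_mem (mem_Iic.2 ((mem_Iio.1 hy).le.trans hx)), Pi.one_apply, Pi.one_apply]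
    · filter_upwards [Ioo_mem_nhdsLT (not_le.1 hx)] with y hy
      rw [indicator_of_notMem (notMem_Iic.2 hy.1),
        indicator_of_notMem (notMem_Iic.2 (not_le.1 hx))]
  filter_upwards [(Filter.eventually_all_finset _).2 h] with y hy
  exact Finset.sum_congr rfl fun j hj => by rw [hy j hj]

lemma knots_eq_of_knotIndicator_eq (ha : IsKnotSeq s a) (hb : IsKnotSeq s' b)
    (h : ∀ x, 0 < x → knotIndicator s a x = knotIndicator s' b x) :
    s = s' ∧ ∀ j, j < s → a j = b j := by
  induction s generalizing s' a b with
  | zero =>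
    rcases s' with _ | s'
    · simp
    · have := h (b 0) (hb.2 0 (by omega))
      rw [knotIndicator_zero, knotIndicator_head hb] at this
      norm_num at this
  | succ s ih =>
    rcases s' with _ | s'
    · have := h (a 0) (ha.2 0 (by omega))
      rw [knotIndicator_zero, knotIndicator_head ha] at this
      norm_num at this
    have hhead : a 0 = b 0 := by
      by_contra hne
      rcases lt_or_gt_of_ne hne with hlt | hlt
      · have := h (b 0) (hb.2 0 (by omega))
        rw [knotIndicator_head hb,
          knotIndicator_eq_zero fun j hj => (ha.le_head hj).trans_lt hlt] at this
        norm_num at this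
      · have := h (a 0) (ha.2 0 (by omega))
        rw [knotIndicator_head ha,
          knotIndicator_eq_zero fun j hj => (hb.le_head hj).trans_lt hlt] at this
        norm_num at this
    have htail : ∀ x, 0 < x → knotIndicator s (fun j => a (j + 1)) x
        = knotIndicator s' (fun j => b (j + 1)) x := by
      intro x hx
      have hx' := h x hx
      rw [knotIndicator_succ, knotIndicator_succ, hhead] at hx'
      linarith
    obtain ⟨rfl, htails⟩ := ih ha.tail hb.tail htail
    refine ⟨rfl, fun j hj => ?_⟩
    rcases j with _ | j
    · exact hhead
    · exact htails j (by omega)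

end knotIndicator

def SignPattern (D : ℝ → ℝ) (σ : ℝ) (Z : Finset ℝ) : Prop :=
  ∀ x, 0 < x → D x ≠ 0 → D x = σ * (-1) ^ #{z ∈ Z | x ≤ z}

/-- The sign behaviour of `knotIndicator m a - knotIndicator m' b` for knots in `(0, T]`: `σ` is
its sign near the top, `Z` the points where it changes sign. The truncated `m - 1` lets the zero
function satisfy the bound for `m = m' = 0`. -/
def SignChangeBound (D : ℝ → ℝ) (T : ℝ) (m m' : ℕ) : Prop :=
  ∃ σ : ℝ, ∃ Z : Finset ℝ, (σ = 1 ∧ #Z ≤ m - 1 ∧ #Z ≤ m' ∨ σ = -1 ∧ #Z ≤ m ∧ #Z ≤ m' - 1) ∧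
    (∀ z ∈ Z, z ∈ Ioo 0 T) ∧ SignPattern D σ Z

section signChanges

variable {D D' : ℝ → ℝ} {σ c T : ℝ} {Z : Finset ℝ} {m m' : ℕ}

lemma SignChangeBound.of_forall_eq_zero_or (hσ : σ = 1 ∨ σ = -1) (h : ∀ x, D x = 0 ∨ D x = σ) :
    SignChangeBound D T m m' := by
  refine ⟨σ, ∅, ?_, by simp, fun x _ hD => by simpa using (h x).resolve_left hD⟩
  rcases hσ with rfl | rfl
  · exact Or.inl ⟨rfl, by simp, by simp⟩
  · exact Or.inr ⟨rfl, by simp, by simp⟩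

lemma SignPattern.neg (h : SignPattern D σ Z) : SignPattern (fun x => -D x) (-σ) Z :=
  fun x hx hD => by
    simp only at hD ⊢
    rw [h x hx (neg_ne_zero.1 hD)]
    ring

lemma SignChangeBound.neg_swap (h : SignChangeBound D T m m') :
    SignChangeBound (fun x => -D x) T m' m := by
  obtain ⟨σ, Z, hcard, hZ, hpat⟩ := h
  refine ⟨-σ, Z, ?_, hZ, hpat.neg⟩
  rcases hcard with ⟨rfl, h⟩ | ⟨rfl, h⟩
  · exact Or.inr ⟨rfl, h.2, h.1⟩
  · exact Or.inl ⟨neg_neg _, h.2, h.1⟩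

lemma SignChangeBound.neg_succ (h : SignChangeBound D T m m') :
    SignChangeBound (fun x => -D x) T (m + 1) (m' + 1) := by
  obtain ⟨σ, Z, hcard, hZ, hpat⟩ := h
  refine ⟨-σ, Z, ?_, hZ, hpat.neg⟩
  rcases hcard with ⟨rfl, h⟩ | ⟨rfl, h⟩
  · exact Or.inr ⟨rfl, by omega, by omega⟩
  · exact Or.inl ⟨neg_neg _, by omega, by omega⟩

/-- A sign change at `c` is added exactly when `ε D'` is negative just below `c`. -/
lemma SignPattern.extend {ε : ℝ} (h : SignPattern D' σ Z) (hεσ : ε * σ = 1 ∨ ε * σ = -1)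
    (hZ : ∀ z ∈ Z, z < c) (hlow : ∀ y, y ≤ c → D y = ε * D' y)
    (htop : ∀ y, c < y → D y = 0 ∨ D y = 1) :
    SignPattern D 1 (if ε * σ = 1 then Z else insert c Z) := by
  intro y hy hD
  rcases le_or_gt y c with hyc | hyc
  · have hD' : D' y ≠ 0 := fun h0 => hD (by rw [hlow y hyc, h0, mul_zero])
    rw [hlow y hyc, h y hy hD', ← mul_assoc]
    split_ifs with h1
    · rw [h1]
    · have hc : c ∉ Z := fun hc => lt_irrefl c (hZ c hc)
      rw [Finset.filter_insert, if_pos hyc, Finset.card_insert_of_notMem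
        (fun hm => hc (Finset.mem_filter.1 hm).1), hεσ.resolve_left h1, pow_succ]
      ring
  · have hempty : ∀ Z' : Finset ℝ, (∀ z ∈ Z', z ≤ c) → #{z ∈ Z' | y ≤ z} = 0 := fun Z' hZ' =>
      Finset.card_eq_zero.2 <| Finset.filter_eq_empty_iff.2 fun z hz =>
        not_le.2 ((hZ' z hz).trans_lt hyc)
    rw [(htop y hyc).resolve_left hD]
    split_ifs
    · rw [hempty Z fun z hz => (hZ z hz).le]; simp
    · rw [hempty _ fun z hz => ?_]
      · simp
      · rcases Finset.mem_insert.1 hz with rfl | hz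
        · rfl
        · exact (hZ z hz).le

lemma SignChangeBound.extend_pos (h : SignChangeBound D' c m m') (hm' : 1 ≤ m') (hc : c ∈ Ioo 0 T)
    (hlow : ∀ y, y ≤ c → D y = D' y) (htop : ∀ y, c < y → D y = 0 ∨ D y = 1) :
    SignChangeBound D T (m + 2) m' := by
  obtain ⟨σ, Z, hcard, hZ, hpat⟩ := h
  have hσ : 1 * σ = 1 ∨ 1 * σ = -1 := by rcases hcard with ⟨rfl, -⟩ | ⟨rfl, -⟩ <;> norm_num
  refine ⟨1, _, Or.inl ⟨rfl, ?_⟩, fun z hz => ?_, hpat.extend hσ (fun z hz => (hZ z hz).2)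
    (fun y hy => by rw [hlow y hy, one_mul]) htop⟩
  · split_ifs with h1
    · rcases hcard with ⟨-, h⟩ | ⟨rfl, -⟩
      · omega
      · norm_num at h1
    · rcases hcard with ⟨rfl, -⟩ | ⟨-, h⟩
      · norm_num at h1
      · have := Finset.card_insert_le c Z; omega
  · have hZT : ∀ z ∈ Z, z ∈ Ioo 0 T := fun z hz => ⟨(hZ z hz).1, (hZ z hz).2.trans hc.2⟩
    split_ifs at hz
    · exact hZT z hz
    · rcases Finset.mem_insert.1 hz with rfl | hz
      · exact hc
      · exact hZT z hz

lemma SignChangeBound.extend_neg (h : SignChangeBound D' c m m') (hm : 1 ≤ m) (hc : c ∈ Ioo 0 T)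
    (hlow : ∀ y, y ≤ c → D y = -D' y) (htop : ∀ y, c < y → D y = 0 ∨ D y = 1) :
    SignChangeBound D T (m + 1) (m' + 1) := by
  obtain ⟨σ, Z, hcard, hZ, hpat⟩ := h
  have hσ : -1 * σ = 1 ∨ -1 * σ = -1 := by rcases hcard with ⟨rfl, -⟩ | ⟨rfl, -⟩ <;> norm_num
  refine ⟨1, _, Or.inl ⟨rfl, ?_⟩, fun z hz => ?_, hpat.extend hσ (fun z hz => (hZ z hz).2)
    (fun y hy => by rw [hlow y hy, neg_one_mul]) htop⟩
  · split_ifs with h1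
    · rcases hcard with ⟨rfl, -⟩ | ⟨-, h⟩
      · norm_num at h1
      · omega
    · rcases hcard with ⟨-, h⟩ | ⟨rfl, -⟩
      · have := Finset.card_insert_le c Z; omega
      · norm_num at h1
  · have hZT : ∀ z ∈ Z, z ∈ Ioo 0 T := fun z hz => ⟨(hZ z hz).1, (hZ z hz).2.trans hc.2⟩
    split_ifs at hz
    · exact hZT z hz
    · rcases Finset.mem_insert.1 hz with rfl | hz
      · exact hc
      · exact hZT z hz

end signChanges

section knotSignChanges

variable {s s' : ℕ} {a b : ℕ → ℝ} {T : ℝ}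

lemma knotIndicator_sub_eq_zero_or_one (ha : ∀ i j, i < j → j < s → a j < a i) {c : ℝ}
    (hbc : ∀ j, j < s' → b j ≤ c) {y : ℝ} (hy : c < y) :
    knotIndicator s a y - knotIndicator s' b y = 0 ∨
      knotIndicator s a y - knotIndicator s' b y = 1 := by
  rw [knotIndicator_eq_zero fun j hj => (hbc j hj).trans_lt hy, sub_zero]
  exact knotIndicator_eq_zero_or_one ha y

lemma signChangeBound_of_head_lt
    (IH : ∀ {s₁ s₁' : ℕ} {a₁ b₁ : ℕ → ℝ} {T₁ : ℝ}, s₁ + s₁' < s + s' → IsKnotSeq s₁ a₁ →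
      IsKnotSeq s₁' b₁ → (∀ j, j < s₁ → a₁ j ≤ T₁) → (∀ j, j < s₁' → b₁ j ≤ T₁) →
      SignChangeBound (fun x => knotIndicator s₁ a₁ x - knotIndicator s₁' b₁ x) T₁ s₁ s₁')
    (ha : IsKnotSeq s a) (hb : IsKnotSeq s' b) (hs : 1 ≤ s) (hs' : 1 ≤ s') (hba : b 0 < a 0)
    (haT : a 0 ≤ T) :
    SignChangeBound (fun x => knotIndicator s a x - knotIndicator s' b x) T s s' := by
  obtain ⟨s, rfl⟩ : ∃ s₀, s = s₀ + 1 := ⟨s - 1, by omega⟩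
  obtain ⟨s', rfl⟩ : ∃ s₀, s' = s₀ + 1 := ⟨s' - 1, by omega⟩
  have hb0 : ∀ j, j < s' + 1 → b j ≤ b 0 := fun j hj => hb.le_head hj
  rcases s with _ | s
  · refine .of_forall_eq_zero_or (Or.inl rfl) fun y => ?_
    rcases le_or_gt y (b 0) with hy | hy
    · rw [knotIndicator_succ_of_le (hy.trans hba.le), knotIndicator_zero,
        knotIndicator_succ_of_le hy]
      rcases knotIndicator_eq_zero_or_one hb.tail.1 y with h | h <;> simp [h]
    · exact knotIndicator_sub_eq_zero_or_one ha.1 hb0 hy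
  have ha1 : a 1 < a 0 := ha.1 0 1 (by omega) (by omega)
  have ha1' : ∀ j, j < s + 1 → a (j + 1) ≤ a 1 := fun j hj => ha.tail.le_head hj
  rcases le_or_gt (b 0) (a 1) with hba1 | hab1
  · -- `a 0 > a 1 ≥ b 0`: on `(0, a 1]` the two largest knots of `a` cancel.
    have hIH := IH (a₁ := fun j => a (j + 2)) (by omega) ha.tail.tail hb
      (fun j hj => (ha.1 1 (j + 2) (by omega) (by omega)).le) fun j hj => (hb0 j hj).trans hba1
    refine hIH.extend_pos (by omega) ⟨ha.2 1 (by omega), ha1.trans_le haT⟩ (fun y hy => ?_)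
      fun y hy => knotIndicator_sub_eq_zero_or_one ha.1 (fun j hj => (hb0 j hj).trans hba1) hy
    rw [knotIndicator_succ_of_le (hy.trans ha1.le), knotIndicator_succ_of_le hy]
    ring
  · -- `a 0 > b 0 > a 1`: on `(0, b 0]` the largest knots of `a` and `b` cancel.
    have hIH := IH (by omega) ha.tail hb.tail (fun j hj => (ha1' j hj).trans hab1.le)
      fun j hj => hb0 (j + 1) (by omega)
    refine hIH.extend_neg (by omega) ⟨hb.2 0 (by omega), hba.trans_le haT⟩ (fun y hy => ?_)
      fun y hy => knotIndicator_sub_eq_zero_or_one ha.1 hb0 hy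
    rw [knotIndicator_succ_of_le (hy.trans hba.le), knotIndicator_succ_of_le hy]
    ring

theorem signChangeBound_knotIndicator_sub (ha : IsKnotSeq s a) (hb : IsKnotSeq s' b)
    (haT : ∀ j, j < s → a j ≤ T) (hbT : ∀ j, j < s' → b j ≤ T) :
    SignChangeBound (fun x => knotIndicator s a x - knotIndicator s' b x) T s s' := by
  induction hn : s + s' using Nat.strong_induction_on generalizing s s' a b T with
  | _ n IH =>
  subst hn
  have IH' {s₁ s₁' : ℕ} {a₁ b₁ : ℕ → ℝ} {T₁ : ℝ} (h : s₁ + s₁' < s + s') :=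
    fun ha hb haT hbT => IH _ h (a := a₁) (b := b₁) (T := T₁) ha hb haT hbT rfl
  rcases Nat.eq_zero_or_pos s with rfl | hs
  · refine .of_forall_eq_zero_or (Or.inr rfl) fun y => ?_
    rcases knotIndicator_eq_zero_or_one hb.1 y with h | h <;> simp [knotIndicator_zero, h]
  rcases Nat.eq_zero_or_pos s' with rfl | hs'
  · refine .of_forall_eq_zero_or (Or.inl rfl) fun y => ?_
    rcases knotIndicator_eq_zero_or_one ha.1 y with h | h <;> simp [knotIndicator_zero, h]
  rcases lt_trichotomy (b 0) (a 0) with hlt | heq | hlt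
  · exact signChangeBound_of_head_lt IH' ha hb hs hs' hlt (haT 0 hs)
  · obtain ⟨s, rfl⟩ : ∃ s₀, s = s₀ + 1 := ⟨s - 1, by omega⟩
    obtain ⟨s', rfl⟩ : ∃ s₀, s' = s₀ + 1 := ⟨s' - 1, by omega⟩
    have h := (IH' (by omega) ha.tail hb.tail (fun j hj => haT _ (by omega))
      (fun j hj => hbT _ (by omega))).neg_succ
    convert h using 2 with x
    rw [knotIndicator_succ, knotIndicator_succ, heq]
    ring
  · have h := (signChangeBound_of_head_lt (fun h => IH' (by omega)) hb ha hs' hs hlt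
      (hbT 0 hs')).neg_swap
    convert h using 2 with x
    ring

end knotSignChanges

namespace Polynomial

lemma signVariations_le_card_support_sub_one {R : Type*} [Semiring R] [LinearOrder R]
    (P : R[X]) : signVariations P ≤ #P.support - 1 := by
  induction hn : #P.support using Nat.strong_induction_on generalizing P with
  | _ n IH =>
  rcases le_or_gt n 1 with hn1 | hn1
  · obtain ⟨k, c, rfl⟩ := card_support_le_one_iff_monomial.1 (hn ▸ hn1)
    simp
  · have hP : P ≠ 0 := by rintro rfl; simp at hn; omega
    have h := IH _ (hn ▸ eraseLead_support_card_lt hP) P.eraseLead rfl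
    rw [card_support_eraseLead, hn] at h
    have := signVariations_le_eraseLead_succ P
    omega

lemma countP_pos_roots_le_card_support_sub_one {R : Type*} [CommRing R] [LinearOrder R]
    [IsStrictOrderedRing R] (P : R[X]) :
    P.roots.countP (0 < ·) ≤ #P.support - 1 :=
  (roots_countP_pos_le_signVariations P).trans (signVariations_le_card_support_sub_one P)

lemma exists_ne_zero_support_subset_isRoot {K : Type*} [Field K] {E : Finset ℕ} {W : Finset K}
    (h : #W < #E) : ∃ P : K[X], P ≠ 0 ∧ P.support ⊆ E ∧ ∀ w ∈ W, P.IsRoot w := by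
  let M : Matrix W E K := fun w e => (w : K) ^ (e : ℕ)
  obtain ⟨v, hv, hv0⟩ := (Submodule.ne_bot_iff _).1 (LinearMap.ker_ne_bot_of_finrank_lt
    (f := M.mulVecLin) (by simpa using h))
  let P : K[X] := ∑ e : E, C (v e) * X ^ (e : ℕ)
  have hcoeff : ∀ n, P.coeff n = ∑ e : E, if n = e then v e else 0 := fun n => by
    simp [P, finsetSum_coeff]
  refine ⟨P, fun hP => hv0 ?_, fun n hn => ?_, fun w hw => ?_⟩
  · ext e
    simpa [hP, Finset.sum_ite_eq'] using (hcoeff e).symm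
  · by_contra hnE
    refine (mem_support_iff.1 hn) ((hcoeff n).trans (Finset.sum_eq_zero fun e _ => ?_))
    rw [if_neg fun h : n = e => hnE (h ▸ e.2)]
  · have : Matrix.mulVec M v ⟨w, hw⟩ = 0 := congrFun (LinearMap.mem_ker.1 hv) ⟨w, hw⟩
    simp only [Matrix.mulVec, dotProduct, M] at this
    rw [IsRoot, ← this]
    simp only [P, eval_finsetSum, eval_mul, eval_C, eval_pow, eval_X, mul_comm]

end Polynomial

lemma IsPreconnected.exists_sign_eq {X : Type*} [TopologicalSpace X] {S : Set X}
    (hS : IsPreconnected S) {f : X → ℝ} (hf : ContinuousOn f S) (h0 : ∀ x ∈ S, f x ≠ 0)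
    {x₀ : X} (hx₀ : x₀ ∈ S) : ∃ τ : ℝ, (τ = 1 ∨ τ = -1) ∧ ∀ x ∈ S, 0 < τ * f x := by
  refine ⟨if 0 < f x₀ then 1 else -1, by split_ifs <;> simp, fun x hx => ?_⟩
  have key : ∀ {y z}, y ∈ S → z ∈ S → f y ≤ 0 → 0 ≤ f z → False := fun hy hz hfy hfz => by
    obtain ⟨w, hw, hw0⟩ := hS.intermediate_value hy hz hf ⟨hfy, hfz⟩
    exact h0 w hw hw0
  by_contra hneg
  split_ifs at hneg with h
  · exact key hx hx₀ (by linarith) h.le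
  · exact key hx₀ hx (not_lt.1 h) (by linarith)

lemma neg_one_pow_card_filter_mul_prod_sub_pos {R : Type*} [CommRing R] [LinearOrder R]
    [IsStrictOrderedRing R] (W : Finset R) {x : R} (hx : x ∉ W) :
    0 < (-1) ^ #{w ∈ W | x ≤ w} * ∏ w ∈ W, (x - w) := by
  rw [← Finset.prod_const, Finset.prod_filter, ← Finset.prod_mul_distrib]
  refine Finset.prod_pos fun w hw => ?_
  have hxw : x ≠ w := fun h => hx (h ▸ hw)
  split_ifs with h
  · linarith [lt_of_le_of_ne h hxw]
  · linarith [not_le.1 h]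

namespace Polynomial

/-- By Descartes' rule of signs the roots in `W` are simple and the cofactor of
`∏_{w ∈ W} (X - w)` has no positive root. -/
lemma exists_sign_eq_of_isRoot {P : ℝ[X]} (hP : P ≠ 0) {W : Finset ℝ} (hWpos : ∀ w ∈ W, 0 < w)
    (hroot : ∀ w ∈ W, P.IsRoot w) (hsupp : #P.support ≤ #W + 1) :
    ∃ τ : ℝ, (τ = 1 ∨ τ = -1) ∧
      ∀ x, 0 < x → x ∉ W → 0 < τ * (-1) ^ #{w ∈ W | x ≤ w} * P.eval x := by
  set F : ℝ[X] := (W.val.map fun w => X - C w).prod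
  obtain ⟨Q, rfl⟩ : F ∣ P :=
    (Multiset.prod_X_sub_C_dvd_iff_le_roots hP _).2 <| (Multiset.le_iff_subset W.nodup).2
      fun w hw => (mem_roots hP).2 (hroot w hw)
  have hQ : ∀ x, 0 < x → Q.eval x ≠ 0 := by
    intro x hx hQx
    have hcount := countP_pos_roots_le_card_support_sub_one (F * Q)
    have hW : W.val.countP (0 < ·) = #W := Multiset.countP_eq_card.2 hWpos
    have hQpos : 0 < Q.roots.countP (0 < ·) :=
      Multiset.countP_pos.2 ⟨x, (mem_roots (right_ne_zero_of_mul hP)).2 hQx, hx⟩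
    rw [roots_mul hP, roots_multiset_prod_X_sub_C, Multiset.countP_add, hW] at hcount
    omega
  obtain ⟨τ, hτ, hτQ⟩ := isPreconnected_Ioi.exists_sign_eq Q.continuous.continuousOn hQ
    (mem_Ioi.2 one_pos)
  refine ⟨τ, hτ, fun x hx hxW => ?_⟩
  have hprod : F.eval x = ∏ w ∈ W, (x - w) := by
    simp only [F, eval_multiset_prod, Multiset.map_map, Function.comp_def, eval_sub, eval_X, eval_C,
      Finset.prod_eq_multiset_prod]
  rw [eval_mul, hprod, show ∀ u v w : ℝ, τ * u * (v * w) = (u * v) * (τ * w) by intros; ring]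
  exact mul_pos (neg_one_pow_card_filter_mul_prod_sub_pos W hxW) (hτQ x hx)

end Polynomial

section integrals

variable {s s' : ℕ} {a b : ℕ → ℝ} {ψ : ℝ → ℝ} {T : ℝ}

lemma knotIndicator_mul (s : ℕ) (a : ℕ → ℝ) (ψ : ℝ → ℝ) (x : ℝ) :
    knotIndicator s a x * ψ x = ∑ j ∈ range s, (-1) ^ j * (Iic (a j)).indicator ψ x := by
  rw [knotIndicator, Finset.sum_mul]
  refine Finset.sum_congr rfl fun j _ => ?_
  rw [mul_assoc, ← indicator_mul_left]
  simp only [Pi.one_apply, one_mul]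

lemma intervalIntegrable_indicator_Iic (hψ : Continuous ψ) (c u v : ℝ) :
    IntervalIntegrable ((Iic c).indicator ψ) volume u v :=
  intervalIntegrable_iff.2 <|
    (intervalIntegrable_iff.1 (hψ.intervalIntegrable u v)).indicator measurableSet_Iic

lemma intervalIntegrable_knotIndicator_mul (hψ : Continuous ψ) (u v : ℝ) :
    IntervalIntegrable (fun x => knotIndicator s a x * ψ x) volume u v := by
  have hfun : (fun x => knotIndicator s a x * ψ x)
      = ∑ j ∈ range s, fun x => (-1) ^ j * (Iic (a j)).indicator ψ x := by
    ext x
    simp [Finset.sum_apply, knotIndicator_mul]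
  rw [hfun]
  exact IntervalIntegrable.sum _ fun j _ =>
    (intervalIntegrable_indicator_Iic hψ (a j) u v).const_mul _

lemma integral_knotIndicator_mul (hψ : Continuous ψ) (haT : ∀ j, j < s → a j ∈ Icc 0 T) :
    ∫ x in (0 : ℝ)..T, knotIndicator s a x * ψ x
      = ∑ j ∈ range s, (-1) ^ j * ∫ x in (0 : ℝ)..a j, ψ x := by
  simp_rw [knotIndicator_mul]
  rw [intervalIntegral.integral_finsetSum fun j _ =>
    (intervalIntegrable_indicator_Iic hψ (a j) 0 T).const_mul _]
  refine Finset.sum_congr rfl fun j hj => ?_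
  rw [intervalIntegral.integral_const_mul]
  exact congrArg _ (intervalIntegral.integral_indicator (haT j (mem_range.1 hj)))

lemma Polynomial.integral_eval (P : Polynomial ℝ) (c : ℝ) :
    ∫ x in (0 : ℝ)..c, P.eval x = ∑ e ∈ P.support, P.coeff e / (e + 1) * c ^ (e + 1) := by
  simp_rw [Polynomial.eval_eq_sum, Polynomial.sum_def]
  rw [intervalIntegral.integral_finsetSum (f := fun e x => P.coeff e * x ^ e) fun e _ =>
    (continuous_const.mul (continuous_pow e)).intervalIntegrable _ _]
  refine Finset.sum_congr rfl fun e _ => ?_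
  rw [intervalIntegral.integral_const_mul, integral_pow]
  ring

lemma integral_knotIndicator_mul_eval (haT : ∀ j, j < s → a j ∈ Icc 0 T) (P : Polynomial ℝ) :
    ∫ x in (0 : ℝ)..T, knotIndicator s a x * P.eval x
      = ∑ e ∈ P.support, P.coeff e / (e + 1) * ∑ j ∈ range s, (-1) ^ j * a j ^ (e + 1) := by
  simp_rw [integral_knotIndicator_mul P.continuous haT, Polynomial.integral_eval, Finset.mul_sum]
  rw [Finset.sum_comm]
  exact Finset.sum_congr rfl fun e _ => Finset.sum_congr rfl fun j _ => by ring

lemma integral_knotIndicator_sub_mul_eval_eq_zero (haT : ∀ j, j < s → a j ∈ Icc 0 T)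
    (hbT : ∀ j, j < s' → b j ∈ Icc 0 T) {P : Polynomial ℝ}
    (h : ∀ e ∈ P.support, ∑ j ∈ range s, (-1) ^ j * a j ^ (e + 1)
      = ∑ j ∈ range s', (-1) ^ j * b j ^ (e + 1)) :
    ∫ x in (0 : ℝ)..T, (knotIndicator s a x - knotIndicator s' b x) * P.eval x = 0 := by
  simp_rw [sub_mul]
  rw [intervalIntegral.integral_sub, integral_knotIndicator_mul_eval haT,
    integral_knotIndicator_mul_eval hbT, ← Finset.sum_sub_distrib]
  · exact Finset.sum_eq_zero fun e he => by rw [h e he, sub_self]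
  all_goals exact intervalIntegrable_knotIndicator_mul P.continuous 0 T

end integrals

lemma not_eventually_pos_of_integral_eq_zero {f : ℝ → ℝ} {u v x : ℝ}
    (hf : IntervalIntegrable f volume u v) (hnonneg : ∀ y ∈ Ioc u v, 0 ≤ f y)
    (hint : ∫ y in u..v, f y = 0) (hx : x ∈ Ioc u v) :
    ¬ ∀ᶠ y in 𝓝[<] x, 0 < f y := by
  intro hev
  obtain ⟨w, hw, hwx⟩ := mem_nhdsLT_iff_exists_Ioo_subset.1 hev
  set c := max w u
  have hc : c < x := max_lt (mem_Iio.1 hw) hx.1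
  have hsub : uIcc c x ⊆ uIcc u v := by
    rw [uIcc_of_le hc.le, uIcc_of_le (hx.1.le.trans hx.2)]
    exact Icc_subset_Icc (le_max_right _ _) hx.2
  have hpos : 0 < ∫ y in c..x, f y :=
    intervalIntegral.intervalIntegral_pos_of_pos_on (hf.mono_set hsub)
      (fun y hy => hwx ⟨(le_max_left w u).trans_lt hy.1, hy.2⟩) hc
  have hle := intervalIntegral.integral_mono_interval (le_max_right w u) hc.le hx.2
    ((ae_restrict_iff' measurableSet_Ioc).2 (Filter.Eventually.of_forall hnonneg)) hf
  linarith

/-- `ψ` is chosen to vanish exactly at the sign changes of `D`. -/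
lemma SignChangeBound.exists_polynomial_mul_nonneg {D : ℝ → ℝ} {T : ℝ} {m m' : ℕ}
    (h : SignChangeBound D T m m') {E : Finset ℕ} (hm : m ≤ #E) (hm' : m' ≤ #E)
    (hE : E.Nonempty) :
    ∃ ψ : Polynomial ℝ, ψ ≠ 0 ∧ ψ.support ⊆ E ∧
      ∃ κ : ℝ, κ ≠ 0 ∧ ∀ y, 0 < y → 0 ≤ κ * (D y * ψ.eval y) := by
  obtain ⟨σ, Z, hcard, hZ, hpat⟩ := h
  have hσ : σ * σ = 1 := by rcases hcard with ⟨rfl, -⟩ | ⟨rfl, -⟩ <;> norm_num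
  have hZE : #Z + 1 ≤ #E := by
    have := hE.card_pos
    rcases hcard with ⟨-, h1, h2⟩ | ⟨-, h1, h2⟩ <;> omega
  obtain ⟨E', hE'E, hE'⟩ := Finset.exists_subset_card_eq hZE
  obtain ⟨ψ, hψ0, hψE', hψZ⟩ :=
    Polynomial.exists_ne_zero_support_subset_isRoot (W := Z) (E := E') (by omega)
  obtain ⟨τ, hτ, hψsign⟩ := Polynomial.exists_sign_eq_of_isRoot hψ0 (fun z hz => (hZ z hz).1)
    hψZ ((Finset.card_le_card hψE').trans hE'.le)
  refine ⟨ψ, hψ0, hψE'.trans hE'E, σ * τ, mul_ne_zero (left_ne_zero_of_mul_eq_one hσ)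
    (by rcases hτ with rfl | rfl <;> norm_num), fun y hy => ?_⟩
  by_cases hD : D y = 0
  · simp [hD]
  by_cases hyZ : y ∈ Z
  · simp [(hψZ y hyZ).eq_zero]
  calc (0 : ℝ) ≤ σ * σ * (τ * (-1) ^ #{z ∈ Z | y ≤ z} * ψ.eval y) := by
        rw [hσ, one_mul]; exact (hψsign y hy hyZ).le
    _ = σ * τ * (D y * ψ.eval y) := by rw [hpat y hy hD]; ring

theorem knots_eq_of_alternating_power_sums_eq {s s' : ℕ} {a b : ℕ → ℝ} (ha : IsKnotSeq s a)
    (hb : IsKnotSeq s' b) {E : Finset ℕ} (hs : s ≤ #E) (hs' : s' ≤ #E)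
    (h : ∀ e ∈ E, ∑ j ∈ range s, (-1) ^ j * a j ^ (e + 1)
      = ∑ j ∈ range s', (-1) ^ j * b j ^ (e + 1)) :
    s = s' ∧ ∀ j, j < s → a j = b j := by
  refine knots_eq_of_knotIndicator_eq ha hb fun x hx => ?_
  by_contra hne
  set T := max x (max (a 0) (b 0))
  have haT : ∀ j, j < s → a j ∈ Icc 0 T := fun j hj =>
    ⟨(ha.2 j hj).le, (ha.le_head hj).trans ((le_max_left _ _).trans (le_max_right _ _))⟩
  have hbT : ∀ j, j < s' → b j ∈ Icc 0 T := fun j hj =>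
    ⟨(hb.2 j hj).le, (hb.le_head hj).trans ((le_max_right _ _).trans (le_max_right _ _))⟩
  have hE : E.Nonempty := by
    rw [← Finset.card_pos]
    by_contra! h0
    obtain ⟨rfl, rfl⟩ : s = 0 ∧ s' = 0 := by omega
    simp [knotIndicator_zero] at hne
  obtain ⟨ψ, hψ0, hψE, κ, hκ, hnonneg⟩ := (signChangeBound_knotIndicator_sub ha hb
    (fun j hj => (haT j hj).2) fun j hj => (hbT j hj).2).exists_polynomial_mul_nonneg hs hs' hE
  set f := fun y => κ * ((knotIndicator s a y - knotIndicator s' b y) * ψ.eval y)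
  have hint : ∫ y in (0 : ℝ)..T, f y = 0 := by
    rw [intervalIntegral.integral_const_mul,
      integral_knotIndicator_sub_mul_eval_eq_zero haT hbT fun e he => h e (hψE he), mul_zero]
  have hev : ∀ᶠ y in 𝓝[<] x, 0 < f y := by
    filter_upwards [eventually_knotIndicator_eq s a x, eventually_knotIndicator_eq s' b x,
      Ioo_mem_nhdsLT hx, ψ.roots.toFinset.finite_toSet.eventually_cofinite_notMem.filter_mono
        ((nhdsLT_le_nhdsNE x).trans (nhdsNE_le_cofinite x))] with y hya hyb hy hyψ
    refine (hnonneg y hy.1).lt_of_ne (mul_ne_zero hκ (mul_ne_zero ?_ fun h0 => ?_)).symm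
    · rwa [hya, hyb, sub_ne_zero]
    · exact hyψ (Multiset.mem_toFinset.2 ((Polynomial.mem_roots hψ0).2 h0))
  have hfint : IntervalIntegrable f volume 0 T := by
    simpa only [f, sub_mul] using ((intervalIntegrable_knotIndicator_mul ψ.continuous 0 T).sub
      (intervalIntegrable_knotIndicator_mul ψ.continuous 0 T)).const_mul κ
  exact not_eventually_pos_of_integral_eq_zero hfint (fun y hy => hnonneg y hy.1) hint
    ⟨hx, le_max_left _ _⟩ hev

lemma alternating_power_sums_eq_of_nrm_eq {r s s' : ℕ} {a b : ℕ → ℝ} {l : ℝ}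
    (ha : ∀ i j, i < j → j < s → a j < a i) (hap : ∀ j, j < s → 0 < a j)
    (hb : ∀ i j, i < j → j < s' → b j < b i) (hbp : ∀ j, j < s' → 0 < b j) (hl : 0 < l)
    {q : ℕ} (hq : q < r) (h : nrm r q (splineFun r s a l) = nrm r q (splineFun r s' b l)) :
    ∑ j ∈ range s, (-1) ^ j * a j ^ (r - q) = ∑ j ∈ range s', (-1) ^ j * b j ^ (r - q) := by
  rw [nrm_splineFun_of_lt ha hap hl hq, nrm_splineFun_of_lt hb hbp hl hq] at h
  exact mul_left_cancel₀ (by positivity) h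

lemma card_image_Ico_sub_sub_one {r d : ℕ} {k : ℕ → ℕ}
    (hmono : ∀ i j, 1 ≤ i → i < j → j ≤ d → k i < k j) (hkr : ∀ i, 1 ≤ i → i < d → k i < r) :
    #((Finset.Ico 1 d).image fun i => r - k i - 1) = d - 1 := by
  have hanti : StrictAntiOn (fun i => r - k i - 1) (Ico 1 d) := fun i hi j hj hij => by
    have := hmono i j hi.1 hij hj.2.le
    have := hkr j hj.1 hj.2
    dsimp only
    omega
  rw [Finset.card_image_of_injOn (by simpa using hanti.injOn), Nat.card_Ico]

/-- Lemma 2: two splines in `Φ_{r,d-1}` with equal norms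
`‖φ_1^{(k_i)}‖ = ‖φ_2^{(k_i)}‖`, `i = 1,…,d`, `k_d = r`, are identical. -/
theorem stmt_11 (r d : ℕ) (k : ℕ → ℕ)
    (hmono : ∀ i j, 1 ≤ i → i < j → j ≤ d → k i < k j)
    (hkd : k d = r)
    (φ1 φ2 : ℝ → ℝ) (h1 : IsSpline r (d - 1) φ1) (h2 : IsSpline r (d - 1) φ2)
    (heq : ∀ i, 1 ≤ i → i ≤ d → nrm r (k i) φ1 = nrm r (k i) φ2) :
    φ1 = φ2 := by
  obtain ⟨s, hs1, hsd, a, l, ha, hap, hl, rfl⟩ := h1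
  obtain ⟨s', hs1', hsd', b, m, hb, hbp, hm, rfl⟩ := h2
  have hkr : ∀ i, 1 ≤ i → i < d → k i < r := fun i hi hid => hkd ▸ hmono i d hi hid le_rfl
  have hr : 1 ≤ r := by have := hkr 1 le_rfl (by omega); omega
  obtain rfl : l = m := by
    simpa only [hkd, nrm_splineFun_self ha hap hl hs1 hr, nrm_splineFun_self hb hbp hm hs1' hr]
      using heq d (by omega) le_rfl
  have hE := card_image_Ico_sub_sub_one hmono hkr
  obtain ⟨rfl, hab⟩ := knots_eq_of_alternating_power_sums_eq ⟨ha, hap⟩ ⟨hb, hbp⟩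
    (E := (Finset.Ico 1 d).image fun i => r - k i - 1) (by omega) (by omega) (by
      simp only [Finset.mem_image, Finset.mem_Ico]
      rintro _ ⟨i, ⟨hi1, hid⟩, rfl⟩
      rw [show r - k i - 1 + 1 = r - k i by have := hkr i hi1 hid; omega]
      exact alternating_power_sums_eq_of_nrm_eq ha hap hb hbp hl (hkr i hi1 hid) (heq i hi1 hid.le))
  ext t
  exact congrArg _ (Finset.sum_congr rfl fun j hj => by rw [hab j (mem_range.1 hj)])
end

section
/- Let r ∈ ℕ, let 0 ≤ k_1 < k_2 < k_3 = r be integers, and let M_{k_1}, M_{k_2}, M_r be positive numbers. Then there exists a function x ∈ L^{r,r}_{∞,∞}(ℝ₋) with ‖x^{(k_1)}‖ = M_{k_1}, ‖x^{(k_2)}‖ = M_{k_2} and ‖x^{(r)}‖ = M_r if and only if M_{k_1} ≥ ((r−k_2)!^{(r−k_1)/(r−k_2)} / (r−k_1)!) · M_{k_2}^{(r−k_1)/(r−k_2)} · M_r^{(k_1−k_2)/(r−k_2)}. -/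
open Set

/-!
For `x` in the class, each `x^{(k)}`, `k < r`, is nonnegative and nondecreasing on `ℝ₋`, so its
norm is `x^{(k)}(0)`. Choose `A` so that the one-knot spline `φ(t) = M_r (t + A)_+^r / r!` has
`φ^{(k_2)}(0) = x^{(k_2)}(0)`, and put `E_k = x^{(k)} - φ^{(k)}` on `[-A, 0]`. Then `E_k(-A) ≥ 0`
for `k < r`, and `E_{r-1}` is antitone because `x^{(r-1)}` is `M_r`-Lipschitz; such a chain of
derivatives changes sign at most once, from `+` to `-`, so `E_{k_2}(0) = 0` forces `E_{k_2} ≥ 0`,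
and integrating up from `-A` gives `E_{k_1}(0) ≥ 0`, which is the inequality.

Conversely, the two-knot splines `M_r ((t + a)_+^r - (t + b)_+^r) / r!` with `0 ≤ b < a` lie in
the class, with `‖x^{(r)}‖ = M_r` and `‖x^{(k)}‖ = M_r (a^{r-k} - b^{r-k}) / (r-k)!`; an
intermediate value argument in `b` realises any admissible `M_{k_1}`, `M_{k_2}`.
-/

open Filter Topology

section DerivChain

variable {a b : ℝ}

theorem monotoneOn_Icc_of_hasDerivAt_nonneg {f f' : ℝ → ℝ} (hf : ContinuousOn f (Icc a b))
    (hf' : ∀ t ∈ Ioo a b, HasDerivAt f (f' t) t) (hpos : ∀ t ∈ Ioo a b, 0 ≤ f' t) :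
    MonotoneOn f (Icc a b) :=
  monotoneOn_of_hasDerivWithinAt_nonneg (convex_Icc a b) hf
    (by simpa using fun t ht => (hf' t ht).hasDerivWithinAt) (by simpa using hpos)

theorem antitoneOn_Icc_of_hasDerivAt_nonpos {f f' : ℝ → ℝ} (hf : ContinuousOn f (Icc a b))
    (hf' : ∀ t ∈ Ioo a b, HasDerivAt f (f' t) t) (hneg : ∀ t ∈ Ioo a b, f' t ≤ 0) :
    AntitoneOn f (Icc a b) :=
  antitoneOn_of_hasDerivWithinAt_nonpos (convex_Icc a b) hf
    (by simpa using fun t ht => (hf' t ht).hasDerivWithinAt) (by simpa using hneg)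

structure IsDerivChain (D : ℕ → ℝ → ℝ) (m : ℕ) (a b : ℝ) : Prop where
  continuousOn : ∀ j ≤ m, ContinuousOn (D j) (Icc a b)
  hasDerivAt : ∀ j < m, ∀ t ∈ Ioo a b, HasDerivAt (D j) (D (j + 1) t) t

namespace IsDerivChain

variable {D : ℕ → ℝ → ℝ} {m : ℕ}

theorem tail (hD : IsDerivChain D (m + 1) a b) : IsDerivChain (fun j => D (j + 1)) m a b :=
  ⟨fun j hj => hD.continuousOn (j + 1) (by omega), fun j hj => hD.hasDerivAt (j + 1) (by omega)⟩

theorem monotoneOn (hD : IsDerivChain D (m + 1) a b) {c d : ℝ} (hac : a ≤ c) (hdb : d ≤ b)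
    (hpos : ∀ t ∈ Ioo c d, 0 ≤ D 1 t) : MonotoneOn (D 0) (Icc c d) :=
  monotoneOn_Icc_of_hasDerivAt_nonneg ((hD.continuousOn 0 (by omega)).mono (Icc_subset_Icc hac hdb))
    (fun t ht => hD.hasDerivAt 0 (by omega) t ⟨hac.trans_lt ht.1, ht.2.trans_le hdb⟩) hpos

theorem antitoneOn (hD : IsDerivChain D (m + 1) a b) {c d : ℝ} (hac : a ≤ c) (hdb : d ≤ b)
    (hneg : ∀ t ∈ Ioo c d, D 1 t ≤ 0) : AntitoneOn (D 0) (Icc c d) :=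
  antitoneOn_Icc_of_hasDerivAt_nonpos ((hD.continuousOn 0 (by omega)).mono (Icc_subset_Icc hac hdb))
    (fun t ht => hD.hasDerivAt 0 (by omega) t ⟨hac.trans_lt ht.1, ht.2.trans_le hdb⟩) hneg

theorem nonneg_of_le (hD : IsDerivChain D m a b) (hleft : ∀ j < m, 0 ≤ D j a)
    (hanti : AntitoneOn (D m) (Icc a b)) {s t : ℝ} (hs : s ∈ Icc a b) (ht : t ∈ Icc a b)
    (hst : s ≤ t) (hDt : 0 ≤ D 0 t) : 0 ≤ D 0 s := by
  induction m generalizing D s t with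
  | zero => exact hDt.trans (hanti hs ht hst)
  | succ m ih =>
    by_contra! hDs
    -- Either `D 1 ≥ 0` on `[a, s]` and `D 0` rises from `D 0 a ≥ 0`, or `D 1 < 0` at some `u ≤ s`,
    -- hence by induction on all of `[u, b]`, and `D 0` falls from `s` to `t`.
    by_cases hpos : ∀ u ∈ Icc a s, 0 ≤ D 1 u
    · have := hD.monotoneOn le_rfl hs.2 fun u hu => hpos u (Ioo_subset_Icc_self hu)
      exact (hleft 0 (by omega)).not_gt ((this ⟨le_rfl, hs.1⟩ ⟨hs.1, le_rfl⟩ hs.1).trans_lt hDs)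
    · push Not at hpos
      obtain ⟨u, hu, hDu⟩ := hpos
      have hneg : ∀ v ∈ Icc u b, D 1 v < 0 := fun v hv => lt_of_not_ge fun hDv =>
        hDu.not_ge (ih hD.tail (fun j hj => hleft (j + 1) (by omega)) hanti
          ⟨hu.1, hu.2.trans hs.2⟩ ⟨hu.1.trans hv.1, hv.2⟩ hv.1 hDv)
      have := hD.antitoneOn (hu.1.trans hu.2) ht.2
        fun v hv => (hneg v ⟨hu.2.trans hv.1.le, hv.2.le.trans ht.2⟩).le
      exact hDs.not_ge (hDt.trans (this ⟨le_rfl, hst⟩ ⟨hst, le_rfl⟩ hst))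

theorem nonneg (hD : IsDerivChain D m a b) (hleft : ∀ j < m, 0 ≤ D j a)
    (htop : ∀ t ∈ Icc a b, 0 ≤ D m t) : ∀ t ∈ Icc a b, 0 ≤ D 0 t := by
  induction m generalizing D with
  | zero => exact htop
  | succ m ih =>
    intro t ht
    have hpos := ih hD.tail (fun j hj => hleft (j + 1) (by omega)) htop
    have := hD.monotoneOn le_rfl le_rfl fun u hu => hpos u (Ioo_subset_Icc_self hu)
    exact (hleft 0 (by omega)).trans (this ⟨le_rfl, ht.1.trans ht.2⟩ ht ht.1)

end IsDerivChain

end DerivChain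

theorem hasDerivAt_max_zero_pow_s18 {n : ℕ} (hn : n ≠ 0) (u : ℝ) :
    HasDerivAt (fun u : ℝ => max u 0 ^ (n + 1)) ((n + 1) * max u 0 ^ n) u := by
  have hne : ∀ v ≠ 0, HasDerivAt (fun u : ℝ => max u 0 ^ (n + 1)) ((n + 1) * max v 0 ^ n) v := by
    intro v hv
    rcases hv.lt_or_gt with hv | hv
    · have hzero : (fun u : ℝ => max u 0 ^ (n + 1)) =ᶠ[𝓝 v] fun _ => 0 := by
        filter_upwards [eventually_lt_nhds hv] with w hw
        simp [max_eq_right hw.le]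
      simpa [max_eq_right hv.le, hn] using (hasDerivAt_const v (0 : ℝ)).congr_of_eventuallyEq hzero
    · have hpow : (fun u : ℝ => max u 0 ^ (n + 1)) =ᶠ[𝓝 v] fun u => u ^ (n + 1) := by
        filter_upwards [eventually_gt_nhds hv] with w hw
        rw [max_eq_left hw.le]
      simpa [max_eq_left hv.le] using (hasDerivAt_pow (n + 1) v).congr_of_eventuallyEq hpow
  rcases eq_or_ne u 0 with rfl | hu
  · exact hasDerivAt_of_hasDerivAt_of_ne hne (by fun_prop) (by fun_prop)
  · exact hne u hu

theorem hasDerivAt_splineFun (s : ℕ) (a : ℕ → ℝ) (l : ℝ) {n : ℕ} (hn : n ≠ 0) (t : ℝ) :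
    HasDerivAt (splineFun (n + 1) s a l) (splineFun n s a l t) t := by
  have hterm : ∀ j ∈ Finset.range s, HasDerivAt (fun t => (-1 : ℝ) ^ j * max (t + a j) 0 ^ (n + 1))
      ((-1) ^ j * ((n + 1) * max (t + a j) 0 ^ n)) t := fun j _ =>
    ((hasDerivAt_max_zero_pow_s18 hn (t + a j)).comp_add_const t (a j)).const_mul _
  refine ((HasDerivAt.fun_sum hterm).const_mul (l / ((n + 1).factorial : ℝ))).congr_deriv ?_
  simp only [splineFun, Finset.mul_sum, Nat.factorial_succ, Nat.cast_mul, Nat.cast_succ]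
  refine Finset.sum_congr rfl fun j _ => ?_
  field_simp

theorem iteratedDeriv_splineFun (s : ℕ) (a : ℕ → ℝ) (l : ℝ) {r k : ℕ} (hk : k < r) :
    iteratedDeriv k (splineFun r s a l) = splineFun (r - k) s a l := by
  induction k with
  | zero => simp
  | succ k ih =>
    obtain ⟨n, hn⟩ : ∃ n, r - k = n + 1 := ⟨r - k - 1, by omega⟩
    rw [iteratedDeriv_succ, ih (by omega), hn, show r - (k + 1) = n by omega]
    exact funext fun t => (hasDerivAt_splineFun s a l (by omega) t).deriv

theorem continuous_splineFun (r s : ℕ) (a : ℕ → ℝ) (l : ℝ) : Continuous (splineFun r s a l) := by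
  unfold splineFun; fun_prop

theorem contDiff_splineFun (r s : ℕ) (a : ℕ → ℝ) (l : ℝ) :
    ContDiff ℝ (r - 1 : ℕ) (splineFun r s a l) := by
  have : ContDiff ℝ ((r - 1 : ℕ) : ℕ∞) (splineFun r s a l) := by
    refine contDiff_iff_iteratedDeriv.2 ⟨fun m hm => ?_, fun m hm => ?_⟩
    · rcases Nat.eq_zero_or_pos m with rfl | hm0
      · simpa using continuous_splineFun r s a l
      · rw [iteratedDeriv_splineFun s a l (by norm_cast at hm; omega)]
        exact continuous_splineFun _ s a l
    · norm_cast at hm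
      obtain ⟨n, hn⟩ : ∃ n, r - m = n + 1 := ⟨r - m - 1, by omega⟩
      rw [iteratedDeriv_splineFun s a l (by omega), hn]
      exact fun t => (hasDerivAt_splineFun s a l (by omega) t).differentiableAt
  exact_mod_cast this

section Spline

variable {s : ℕ} {a : ℕ → ℝ} {l : ℝ}

theorem iteratedDerivWithin_splineFun_s18 {U : Set ℝ} (hU : UniqueDiffOn ℝ U) {r k : ℕ} (hk : k < r) :
    EqOn (iteratedDerivWithin k (splineFun r s a l) U) (splineFun (r - k) s a l) U := fun t ht => by
  rw [iteratedDerivWithin_eq_iteratedDeriv hU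
    ((contDiff_splineFun r s a l).contDiffAt.of_le (by exact_mod_cast (by omega : k ≤ r - 1))) ht,
    iteratedDeriv_splineFun s a l hk]

theorem splineFun_one_apply {n : ℕ} {A t : ℝ} (ht : -A ≤ t) :
    splineFun n 1 (fun _ => A) l t = l / n.factorial * (t + A) ^ n := by
  simp [splineFun, max_eq_left (neg_le_iff_add_nonneg.1 ht)]

theorem splineFun_two_apply (r : ℕ) (t : ℝ) :
    splineFun r 2 a l t = l / r.factorial * (max (t + a 0) 0 ^ r - max (t + a 1) 0 ^ r) := by
  simp [splineFun, Finset.sum_range_succ, sub_eq_add_neg]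

variable (hl : 0 ≤ l) (ha : a 1 ≤ a 0)
include ha

include hl in
theorem splineFun_two_nonneg (r : ℕ) (t : ℝ) : 0 ≤ splineFun r 2 a l t := by
  rw [splineFun_two_apply]
  have : max (t + a 1) 0 ^ r ≤ max (t + a 0) 0 ^ r := by gcongr
  positivity

theorem splineFun_one_two_eq :
    splineFun 1 2 a l = fun t => l * min (max (t + a 0) 0) (a 0 - a 1) := by
  funext t
  rw [splineFun_two_apply, Nat.factorial_one, Nat.cast_one, div_one, pow_one, pow_one]
  rcases le_total (t + a 1) 0 with h | h
  · rw [max_eq_right h, sub_zero, min_eq_left (max_le (by linarith) (by linarith))]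
  · rw [max_eq_left h, max_eq_left (by linarith), min_eq_right (by linarith)]
    ring

include hl in
theorem monotone_splineFun_two {r : ℕ} (hr : r ≠ 0) : Monotone (splineFun r 2 a l) := by
  obtain ⟨n, rfl⟩ : ∃ n, r = n + 1 := ⟨r - 1, by omega⟩
  rcases eq_or_ne n 0 with rfl | hn
  · rw [splineFun_one_two_eq ha]
    exact fun u v huv => by dsimp only; gcongr
  · exact monotone_of_hasDerivAt_nonneg (hasDerivAt_splineFun 2 a l hn)
      (splineFun_two_nonneg hl ha n)

include hl in
theorem lipschitzWith_splineFun_one_two : LipschitzWith l.toNNReal (splineFun 1 2 a l) := by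
  rw [splineFun_one_two_eq ha]
  refine LipschitzWith.of_dist_le_mul fun u v => ?_
  rw [Real.dist_eq, Real.dist_eq, ← mul_sub, abs_mul, abs_of_nonneg hl, Real.coe_toNNReal _ hl]
  refine mul_le_mul_of_nonneg_left ?_ hl
  calc _ ≤ |max (u + a 0) 0 - max (v + a 0) 0| := by
        simpa only [sub_self, abs_zero, abs_nonneg, sup_of_le_left] using
          abs_min_sub_min_le_max (max (u + a 0) 0) (a 0 - a 1) (max (v + a 0) 0) (a 0 - a 1)
    _ ≤ |u + a 0 - (v + a 0)| := abs_max_sub_max_le_abs _ _ _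
    _ = |u - v| := by ring_nf

end Spline

theorem nrm_eq_of_monotoneOn {r k : ℕ} (hk : k ≠ r) {x : ℝ → ℝ}
    (hmono : MonotoneOn (iteratedDerivWithin k x (Iic 0)) (Iic 0))
    (hnonneg : ∀ t ≤ 0, 0 ≤ iteratedDerivWithin k x (Iic 0) t) :
    nrm r k x = iteratedDerivWithin k x (Iic 0) 0 := by
  rw [nrm, if_neg hk]
  refine IsGreatest.csSup_eq ⟨⟨0, self_mem_Iic, abs_of_nonneg (hnonneg 0 le_rfl)⟩, ?_⟩
  rintro _ ⟨t, ht, rfl⟩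
  dsimp only
  rw [abs_of_nonneg (hnonneg t ht)]
  exact hmono ht self_mem_Iic ht

section TwoKnotSpline

variable {r : ℕ} {a : ℕ → ℝ} {l : ℝ}

theorem eqOn_iteratedDerivWithin_pred_splineFun_two (hr : r ≠ 0) :
    EqOn (iteratedDerivWithin (r - 1) (splineFun r 2 a l) (Iic 0)) (splineFun 1 2 a l) (Iic 0) := by
  simpa [show r - (r - 1) = 1 by omega] using
    iteratedDerivWithin_splineFun_s18 (uniqueDiffOn_Iic 0) (r := r) (k := r - 1) (by omega)

theorem lipschitzOnWith_iteratedDerivWithin_pred_splineFun_two (hr : r ≠ 0) (hl : 0 ≤ l)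
    (ha : a 1 ≤ a 0) :
    LipschitzOnWith l.toNNReal (iteratedDerivWithin (r - 1) (splineFun r 2 a l) (Iic 0)) (Iic 0) :=
  fun u hu v hv => by
    rw [eqOn_iteratedDerivWithin_pred_splineFun_two hr hu,
      eqOn_iteratedDerivWithin_pred_splineFun_two hr hv]
    exact (lipschitzWith_splineFun_one_two hl ha).lipschitzOnWith hu hv

theorem memLrr_splineFun_two (hr : r ≠ 0) (hl : 0 ≤ l) (ha : a 1 ≤ a 0) :
    MemLrr r (splineFun r 2 a l) := by
  have htop := eqOn_iteratedDerivWithin_pred_splineFun_two (a := a) (l := l) hr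
  refine ⟨(contDiff_splineFun r 2 a l).contDiffOn,
    ⟨l.toNNReal, lipschitzOnWith_iteratedDerivWithin_pred_splineFun_two hr hl ha⟩,
    ⟨splineFun r 2 a l 0, ?_⟩, fun k hk t ht => ?_, ?_⟩
  · rintro _ ⟨t, ht, rfl⟩
    dsimp only
    rw [abs_of_nonneg (splineFun_two_nonneg hl ha r t)]
    exact monotone_splineFun_two hl ha hr ht
  · rw [iteratedDerivWithin_splineFun_s18 (uniqueDiffOn_Iic 0) hk ht]
    exact splineFun_two_nonneg hl ha _ t
  · exact ((monotone_splineFun_two hl ha one_ne_zero).monotoneOn _).congr htop.symm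

theorem nrm_splineFun_two {k : ℕ} (hk : k < r) (hl : 0 ≤ l) (h1 : 0 ≤ a 1) (ha : a 1 ≤ a 0) :
    nrm r k (splineFun r 2 a l) = l / (r - k).factorial * (a 0 ^ (r - k) - a 1 ^ (r - k)) := by
  have hderiv := iteratedDerivWithin_splineFun_s18 (s := 2) (a := a) (l := l) (uniqueDiffOn_Iic 0) hk
  rw [nrm_eq_of_monotoneOn hk.ne
    (((monotone_splineFun_two hl ha (by omega)).monotoneOn _).congr hderiv.symm)
    (fun t ht => hderiv ht ▸ splineFun_two_nonneg hl ha _ t), hderiv self_mem_Iic,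
    splineFun_two_apply]
  simp [max_eq_left h1, max_eq_left (h1.trans ha)]

theorem nrm_self_splineFun_two (hr : r ≠ 0) (hl : 0 ≤ l) (h1 : 0 ≤ a 1) (ha : a 1 < a 0) :
    nrm r r (splineFun r 2 a l) = l := by
  have htop := eqOn_iteratedDerivWithin_pred_splineFun_two (a := a) (l := l) hr
  rw [nrm, if_pos rfl]
  refine IsLeast.csInf_eq ⟨⟨hl, lipschitzOnWith_iteratedDerivWithin_pred_splineFun_two hr hl ha.le⟩,
    fun L ⟨hL, hlip⟩ => ?_⟩
  have h0 : -a 0 ∈ Iic (0 : ℝ) := mem_Iic.2 (by linarith)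
  have h1' : -a 1 ∈ Iic (0 : ℝ) := mem_Iic.2 (neg_nonpos.2 h1)
  have := hlip.dist_le_mul _ h1' _ h0
  rw [htop h1', htop h0, splineFun_one_two_eq ha.le, Real.dist_eq, Real.dist_eq,
    Real.coe_toNNReal _ hL] at this
  have hgap : 0 < a 0 - a 1 := sub_pos.2 ha
  simp only [neg_add_cancel, max_self, neg_add_eq_sub, max_eq_left hgap.le, min_self,
    min_eq_left hgap.le, mul_zero, sub_zero, neg_sub_neg, abs_of_pos hgap,
    abs_of_nonneg (mul_nonneg hl hgap.le)] at this
  exact le_of_mul_le_mul_right this hgap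

end TwoKnotSpline

namespace MemLrr

variable {r : ℕ} {x : ℝ → ℝ}

theorem continuousOn_iteratedDerivWithin (hx : MemLrr r x) {j : ℕ} (hj : j ≤ r - 1) :
    ContinuousOn (iteratedDerivWithin j x (Iic 0)) (Iic 0) :=
  hx.1.continuousOn_iteratedDerivWithin (by exact_mod_cast hj) (uniqueDiffOn_Iic 0)

theorem hasDerivAt_iteratedDerivWithin (hx : MemLrr r x) {j : ℕ} (hj : j < r - 1) {t : ℝ}
    (ht : t < 0) :
    HasDerivAt (iteratedDerivWithin j x (Iic 0)) (iteratedDerivWithin (j + 1) x (Iic 0) t) t := by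
  have hdiff := hx.1.differentiableOn_iteratedDerivWithin (by exact_mod_cast hj)
    (uniqueDiffOn_Iic 0) t ht.le
  rw [iteratedDerivWithin_succ]
  exact hdiff.hasDerivWithinAt.hasDerivAt (Iic_mem_nhds ht)

theorem monotoneOn_iteratedDerivWithin (hx : MemLrr r x) {j : ℕ} (hj : j ≤ r - 1) :
    MonotoneOn (iteratedDerivWithin j x (Iic 0)) (Iic 0) := by
  rcases hj.eq_or_lt with rfl | hj
  · exact hx.2.2.2.2
  · refine monotoneOn_of_hasDerivWithinAt_nonneg (f' := iteratedDerivWithin (j + 1) x (Iic 0))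
      (convex_Iic 0)
      (hx.continuousOn_iteratedDerivWithin hj.le) (fun t ht => ?_) (fun t ht => ?_)
    · rw [interior_Iic] at ht ⊢
      exact (hx.hasDerivAt_iteratedDerivWithin hj ht).hasDerivWithinAt
    · rw [interior_Iic] at ht
      exact hx.2.2.2.1 (j + 1) (by omega) t (mem_Iic.2 (le_of_lt ht))

theorem nrm_eq (hx : MemLrr r x) {k : ℕ} (hk : k < r) :
    nrm r k x = iteratedDerivWithin k x (Iic 0) 0 :=
  nrm_eq_of_monotoneOn hk.ne (hx.monotoneOn_iteratedDerivWithin (by omega))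
    (hx.2.2.2.1 k hk)

theorem sub_le_nrm_mul (hx : MemLrr r x) {u w : ℝ} (hw : w ≤ 0) (huw : u ≤ w) :
    iteratedDerivWithin (r - 1) x (Iic 0) w - iteratedDerivWithin (r - 1) x (Iic 0) u ≤
      nrm r r x * (w - u) := by
  rcases huw.eq_or_lt with rfl | huw
  · simp
  rw [← div_le_iff₀ (sub_pos.2 huw), nrm, if_pos rfl]
  obtain ⟨L, hL⟩ := hx.2.1
  refine le_csInf ⟨L, L.2, by simpa using hL⟩ fun L' ⟨hL', hlip⟩ => ?_
  have := hlip.dist_le_mul w hw u (huw.le.trans hw)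
  rw [Real.dist_eq, Real.dist_eq, Real.coe_toNNReal _ hL', abs_of_pos (sub_pos.2 huw)] at this
  rw [div_le_iff₀ (sub_pos.2 huw)]
  exact (le_abs_self _).trans this

end MemLrr

theorem MemLrr.splineFun_one_le_nrm {r k1 k2 : ℕ} {x : ℝ → ℝ} (hx : MemLrr r x) (h12 : k1 ≤ k2)
    (h2r : k2 < r) {A : ℝ} (hA : 0 ≤ A)
    (hk2 : splineFun (r - k2) 1 (fun _ => A) (nrm r r x) 0 = nrm r k2 x) :
    splineFun (r - k1) 1 (fun _ => A) (nrm r r x) 0 ≤ nrm r k1 x := by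
  set φ : ℕ → ℝ → ℝ := fun k => splineFun (r - k) 1 (fun _ => A) (nrm r r x) with hφ
  set E : ℕ → ℝ → ℝ := fun k t => iteratedDerivWithin k x (Iic 0) t - φ k t with hE
  have hIcc : Icc (-A) 0 ⊆ Iic 0 := fun t ht => ht.2
  have hchain : ∀ k n, k + n ≤ r - 1 → IsDerivChain (fun j => E (k + j)) n (-A) 0 := by
    refine fun k n hkn => ⟨fun j hj => ?_, fun j hj t ht => ?_⟩
    · exact ((hx.continuousOn_iteratedDerivWithin (by omega)).mono hIcc).sub
        (continuous_splineFun _ 1 _ _).continuousOn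
    · obtain ⟨p, hp⟩ : ∃ p, r - (k + j) = p + 1 + 1 := ⟨r - (k + j) - 2, by omega⟩
      have hφ' := hasDerivAt_splineFun 1 (fun _ => A) (nrm r r x) (n := p + 1) (by omega) t
      rw [← hp, show p + 1 = r - (k + (j + 1)) by omega] at hφ'
      exact (hx.hasDerivAt_iteratedDerivWithin (by omega) ht.2).sub hφ'
  have hleft : ∀ k < r, 0 ≤ E k (-A) := fun k hk => by
    simp only [hE, hφ, splineFun_one_apply le_rfl, neg_add_cancel, zero_pow (by omega : r - k ≠ 0),
      mul_zero, sub_zero]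
    exact hx.2.2.2.1 k hk (-A) (by simpa using hA)
  have hanti : AntitoneOn (E (r - 1)) (Icc (-A) 0) := fun u hu w hw huw => by
    have := hx.sub_le_nrm_mul hw.2 huw
    simp only [hE, hφ, splineFun_one_apply hu.1, splineFun_one_apply hw.1,
      show r - (r - 1) = 1 by omega, Nat.factorial_one, Nat.cast_one, div_one, pow_one]
    linarith
  have hE2 : ∀ t ∈ Icc (-A) 0, 0 ≤ E k2 t := fun t ht => by
    refine (hchain k2 (r - 1 - k2) (by omega)).nonneg_of_le (fun j hj => hleft _ (by omega))
      (by simpa [show k2 + (r - 1 - k2) = r - 1 by omega] using hanti) ht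
      ⟨ht.1.trans ht.2, le_rfl⟩ ht.2 ?_
    simp only [hE, hφ, add_zero]
    rw [hk2, hx.nrm_eq h2r, sub_self]
  have hE1 := (hchain k1 (k2 - k1) (by omega)).nonneg (fun j hj => hleft _ (by omega))
    (by simpa [show k1 + (k2 - k1) = k2 by omega] using hE2) 0 ⟨by linarith, le_rfl⟩
  simpa [hE, hx.nrm_eq (h12.trans_lt h2r)] using hE1



theorem mul_sub_pow_le_pow_sub_pow {a b : ℝ} (hb : 0 ≤ b) (hab : b ≤ a) {p q : ℕ} (hpq : p ≤ q) :
    b ^ (q - p) * (a ^ p - b ^ p) ≤ a ^ q - b ^ q := by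
  have ha : 0 ≤ a := hb.trans hab
  have : b ^ (q - p) * a ^ p ≤ a ^ (q - p) * a ^ p := by gcongr
  rw [← pow_add, Nat.sub_add_cancel hpq] at this
  have hbq : b ^ q = b ^ (q - p) * b ^ p := by rw [← pow_add, Nat.sub_add_cancel hpq]
  rw [hbq]
  linarith

theorem exists_pow_sub_pow_eq {p q : ℕ} (hp : p ≠ 0) (hpq : p < q) {A c : ℝ} (hA : 0 < A)
    (hc : A ^ q ≤ c) : ∃ a b : ℝ, 0 ≤ b ∧ b < a ∧ a ^ p - b ^ p = A ^ p ∧ a ^ q - b ^ q = c := by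
  set root : ℝ → ℝ := fun b => (b ^ p + A ^ p) ^ (p⁻¹ : ℝ) with hroot
  have hroot_pow : ∀ b ≥ 0, root b ^ p = b ^ p + A ^ p := fun b hb =>
    Real.rpow_inv_natCast_pow (by positivity) hp
  have hlt : ∀ b ≥ 0, b < root b := fun b hb =>
    (pow_lt_pow_iff_left₀ hb (by positivity) hp).1 (by rw [hroot_pow b hb]; linarith [pow_pos hA p])
  have hcont : Continuous fun b => root b ^ q - b ^ q := by
    have := Real.continuous_rpow_const (q := (p⁻¹ : ℝ)) (by positivity)
    fun_prop
  have htop : Tendsto (fun b => root b ^ q - b ^ q) atTop atTop := by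
    refine tendsto_atTop_mono' atTop ?_ (tendsto_id.atTop_mul_const (pow_pos hA p))
    filter_upwards [eventually_ge_atTop 1] with b hb
    have := mul_sub_pow_le_pow_sub_pow (by linarith) (hlt b (by linarith)).le hpq.le
    rw [hroot_pow b (by linarith), add_sub_cancel_left] at this
    have : b ≤ b ^ (q - p) := le_self_pow₀ hb (by omega)
    simp only [id]
    nlinarith [pow_pos hA p]
  have h0 : root 0 ^ q - 0 ^ q = A ^ q := by
    simp [hroot, zero_pow hp, zero_pow (by omega : q ≠ 0), Real.pow_rpow_inv_natCast hA.le hp]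
  obtain ⟨b, hb, hbc⟩ := intermediate_value_Ici hcont.continuousOn htop (h0 ▸ hc : c ∈ Ici _)
  exact ⟨root b, b, hb, hlt b hb, by rw [hroot_pow b hb]; ring, hbc⟩

theorem sharpBound_eq_splineFun_one {r k1 k2 : ℕ} (h1r : k1 ≤ r) (h2r : k2 < r) {M2 Mr : ℝ}
    (hM2 : 0 < M2) (hMr : 0 < Mr) :
    ((Nat.factorial (r - k2) : ℝ) ^ (((r : ℝ) - (k1 : ℝ)) / ((r : ℝ) - (k2 : ℝ))) /
        (Nat.factorial (r - k1) : ℝ)) *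
      M2 ^ (((r : ℝ) - (k1 : ℝ)) / ((r : ℝ) - (k2 : ℝ))) *
      Mr ^ (((k1 : ℝ) - (k2 : ℝ)) / ((r : ℝ) - (k2 : ℝ))) =
    splineFun (r - k1) 1 (fun _ => ((r - k2).factorial * M2 / Mr) ^ (((r - k2 : ℕ) : ℝ)⁻¹)) Mr
      0 := by
  have hp : ((r - k2 : ℕ) : ℝ) = r - k2 := Nat.cast_sub h2r.le
  have hq : ((r - k1 : ℕ) : ℝ) = r - k1 := Nat.cast_sub h1r
  have hpos : (0 : ℝ) < r - k2 := by rw [← hp]; exact_mod_cast Nat.sub_pos_of_lt h2r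
  have hexp : ((k1 : ℝ) - k2) / (r - k2) = 1 - (r - k1) / (r - k2) := by field_simp; ring
  have hc : (0 : ℝ) ≤ (r - k2).factorial * M2 / Mr := by positivity
  rw [splineFun_one_apply (neg_nonpos.2 (by positivity)), zero_add, ← Real.rpow_natCast,
    ← Real.rpow_mul hc, hexp, Real.rpow_sub hMr, Real.rpow_one, hp, hq,
    Real.div_rpow (by positivity) hMr.le,
    Real.mul_rpow (by positivity) hM2.le, inv_mul_eq_div]
  field_simp

theorem exists_splineFun_two_nrm_eq {r k1 k2 : ℕ} (h12 : k1 < k2) (h2r : k2 < r) {A M1 Mr : ℝ}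
    (hA : 0 < A) (hMr : 0 < Mr) (hle : splineFun (r - k1) 1 (fun _ => A) Mr 0 ≤ M1) :
    ∃ a : ℕ → ℝ, MemLrr r (splineFun r 2 a Mr) ∧ nrm r k1 (splineFun r 2 a Mr) = M1 ∧
      nrm r k2 (splineFun r 2 a Mr) = splineFun (r - k2) 1 (fun _ => A) Mr 0 ∧
      nrm r r (splineFun r 2 a Mr) = Mr := by
  rw [splineFun_one_apply (neg_nonpos.2 hA.le), zero_add] at hle ⊢
  have hc : A ^ (r - k1) ≤ (r - k1).factorial * M1 / Mr := by
    rw [le_div_iff₀ hMr]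
    rw [div_mul_eq_mul_div, div_le_iff₀ (by positivity)] at hle
    linarith
  obtain ⟨a, b, hb, hba, hp, hq⟩ :=
    exists_pow_sub_pow_eq (by omega : r - k2 ≠ 0) (by omega : r - k2 < r - k1) hA hc
  set knots : ℕ → ℝ := fun j => if j = 0 then a else b
  have h0 : knots 0 = a := rfl
  have h1 : knots 1 = b := rfl
  refine ⟨knots, memLrr_splineFun_two (by omega) hMr.le (h1 ▸ h0 ▸ hba.le), ?_, ?_,
    nrm_self_splineFun_two (by omega) hMr.le (h1 ▸ hb) (h1 ▸ h0 ▸ hba)⟩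
  · rw [nrm_splineFun_two (by omega) hMr.le (h1 ▸ hb) (h1 ▸ h0 ▸ hba.le), h0, h1, hq]
    field_simp
  · rw [nrm_splineFun_two (by omega) hMr.le (h1 ▸ hb) (h1 ▸ h0 ▸ hba.le), h0, h1, hp]

theorem stmt_18_general (r k1 k2 : ℕ) (h12 : k1 < k2) (h2r : k2 < r)
    (M1 M2 Mr : ℝ) (hM2 : 0 < M2) (hMr : 0 < Mr) :
    (∃ x : ℝ → ℝ, MemLrr r x ∧
      nrm r k1 x = M1 ∧ nrm r k2 x = M2 ∧ nrm r r x = Mr) ↔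
    ((Nat.factorial (r - k2) : ℝ) ^ (((r : ℝ) - (k1 : ℝ)) / ((r : ℝ) - (k2 : ℝ))) /
        (Nat.factorial (r - k1) : ℝ)) *
      M2 ^ (((r : ℝ) - (k1 : ℝ)) / ((r : ℝ) - (k2 : ℝ))) *
      Mr ^ (((k1 : ℝ) - (k2 : ℝ)) / ((r : ℝ) - (k2 : ℝ))) ≤ M1 := by
  set A := ((r - k2).factorial * M2 / Mr) ^ (((r - k2 : ℕ) : ℝ)⁻¹) with hAdef
  have hA : 0 < A := by positivity
  have hk2 : splineFun (r - k2) 1 (fun _ => A) Mr 0 = M2 := by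
    rw [splineFun_one_apply (neg_nonpos.2 hA.le), zero_add, hAdef,
      Real.rpow_inv_natCast_pow (by positivity) (by omega)]
    field_simp
  rw [sharpBound_eq_splineFun_one (h12.trans h2r).le h2r hM2 hMr]
  constructor
  · rintro ⟨x, hx, rfl, rfl, rfl⟩
    exact hx.splineFun_one_le_nrm h12.le h2r hA.le hk2
  · intro h
    obtain ⟨a, hmem, h1, h2, h3⟩ := exists_splineFun_two_nrm_eq h12 h2r hA hMr h
    exact ⟨_, hmem, h1, h2.trans hk2, h3⟩

/-- Olovyanishnikov-type inequality, case `d = 3`: positive numbers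
`M_{k_1}, M_{k_2}, M_r` are realized by some `x ∈ L^{r,r}_{∞,∞}(ℝ₋)` iff
`M_{k_1} ≥ ((r-k_2)!^{(r-k_1)/(r-k_2)} / (r-k_1)!) M_{k_2}^{(r-k_1)/(r-k_2)} M_r^{(k_1-k_2)/(r-k_2)}`. -/
theorem stmt_18 (r k1 k2 : ℕ) (h12 : k1 < k2) (h2r : k2 < r)
    (M1 M2 Mr : ℝ) (hM1 : 0 < M1) (hM2 : 0 < M2) (hMr : 0 < Mr) :
    (∃ x : ℝ → ℝ, MemLrr r x ∧
      nrm r k1 x = M1 ∧ nrm r k2 x = M2 ∧ nrm r r x = Mr) ↔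
    ((Nat.factorial (r - k2) : ℝ) ^ (((r : ℝ) - (k1 : ℝ)) / ((r : ℝ) - (k2 : ℝ))) /
        (Nat.factorial (r - k1) : ℝ)) *
      M2 ^ (((r : ℝ) - (k1 : ℝ)) / ((r : ℝ) - (k2 : ℝ))) *
      Mr ^ (((k1 : ℝ) - (k2 : ℝ)) / ((r : ℝ) - (k2 : ℝ))) ≤ M1 :=
  stmt_18_general r k1 k2 h12 h2r M1 M2 Mr hM2 hMr
end
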